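/- arXiv:1610.03999 — 6 statements merged into one kernel-verified Lean document; each statement's English description precedes it below -/
import Mathlib

section
/- Let k ≥ 1 and let p, q, r be integers with 1 ≤ p, q, r ≤ k and p + q + r odd. Then the graph T_{2k+1}(p,q,r) — obtained from three vertices u, v, w by joining u to v by two internally disjoint paths of lengths p and 2k+1−p, u to w by two internally disjoint paths of lengths q and 2k+1−q, and v to w by two internally disjoint paths of lengths r and 2k+1−r — has odd-girth at least 2k+1 if and only if p + q + r ≥ 2k+1. -/
open SimpleGraph

/-- `G` has odd-girth at least `n`: every odd cycle has length at least `n`. -/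
def oddGirthAtLeast {V : Type*} (G : SimpleGraph V) (n : ℕ) : Prop :=
  ∀ (x : V) (w : G.Walk x x), w.IsCycle → Odd w.length → n ≤ w.length

/-- The lengths of the six paths of `T_{2k+1}(p,q,r)`. -/
def pathLen (k p q r : ℕ) : Fin 6 → ℕ :=
  ![p, 2*k+1-p, q, 2*k+1-q, r, 2*k+1-r]

/-- The endpoints (among `u,v,w`, numbered `0,1,2`) of the six paths:
paths `0,1` join `u,v`, paths `2,3` join `u,w`, paths `4,5` join `v,w`. -/
def pathEnds : Fin 6 → Fin 3 × Fin 3 :=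
  ![(0,1), (0,1), (0,2), (0,2), (1,2), (1,2)]

/-- Vertices of `T_{2k+1}(p,q,r)`: the three main vertices `u,v,w` together with
the internal vertices of the six paths (a path of length `L` has `L-1` internal
vertices). -/
def TVert (k p q r : ℕ) : Type :=
  Fin 3 ⊕ Σ i : Fin 6, Fin (pathLen k p q r i - 1)

/-- Base adjacency relation for `T_{2k+1}(p,q,r)`. -/
def TAdjBase (k p q r : ℕ) : TVert k p q r → TVert k p q r → Prop
  | Sum.inl a, Sum.inl b =>
      ∃ i, pathLen k p q r i = 1 ∧ pathEnds i = (a, b)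
  | Sum.inl a, Sum.inr ⟨i, j⟩ =>
      ((j : ℕ) = 0 ∧ (pathEnds i).1 = a) ∨
      ((j : ℕ) + 2 = pathLen k p q r i ∧ (pathEnds i).2 = a)
  | Sum.inr ⟨i, j⟩, Sum.inr ⟨i', j'⟩ =>
      ∃ _ : i = i', (j' : ℕ) = (j : ℕ) + 1
  | _, _ => False

/-- The graph `T_{2k+1}(p,q,r)`: three vertices `u,v,w`, with `u,v` joined by two
internally disjoint paths of lengths `p` and `2k+1-p`, `u,w` by paths of lengths
`q` and `2k+1-q`, and `v,w` by paths of lengths `r` and `2k+1-r`. -/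
def TGraph (k p q r : ℕ) : SimpleGraph (TVert k p q r) :=
  SimpleGraph.fromRel (TAdjBase k p q r)

/-!
Every vertex of `T_{2k+1}(p,q,r)` gets a potential in `ℤ⁶ ⧸ Λ`: its displacement along the six
paths from `u`, counted modulo `Λ`, the displacements `(xᵢ Lᵢ)ᵢ` of circulations `x` on the
six-edge multigraph on `u, v, w` (path `i` having length `Lᵢ`). An edge moves the potential by a
unit vector, so a closed walk of length `ℓ` has a displacement `(xᵢ Lᵢ)` with `∑ |xᵢ| Lᵢ ≤ ℓ` and
`∑ |xᵢ| Lᵢ ≡ ℓ (mod 2)`. If `x` has zero flow around the triangle `uvw` it is a sum of digons,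
each of length `2k+1`; otherwise it uses a path of every pair, costing at least `p + q + r`.
Conversely the triangle of paths of lengths `p, r, q` is a closed walk of length `p + q + r`, and
an odd closed walk contains an odd cycle no longer than itself.
-/

namespace SimpleGraph

variable {V : Type*} {G : SimpleGraph V}

theorem Walk.exists_isCycle_odd_length_le {x : V} (w : G.Walk x x) (hw : Odd w.length) :
    ∃ (y : V) (c : G.Walk y y), c.IsCycle ∧ Odd c.length ∧ c.length ≤ w.length := by
  induction hn : w.length using Nat.strong_induction_on generalizing x with
  | _ n ih =>
    subst hn
    cases w with
    | nil => simp at hw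
    | cons hxy p =>
      by_cases hp : p.IsPath
      · refine ⟨x, .cons hxy p, isCycle_iff_isPath_tail_and_le_length.mpr ⟨by simpa, ?_⟩, hw,
          le_rfl⟩
        rcases p with _ | ⟨_, _ | _⟩
        · exact (hxy.ne rfl).elim
        · simp [Nat.odd_iff] at hw
        · simp
      · -- split off a nonempty closed subwalk `c`; `c` or the rest is odd
        obtain ⟨z, c, ⟨a, b, rfl⟩, hc⟩ :
            ∃ (z : V) (c : G.Walk z z), c.IsSubwalk p ∧ ¬c.Nil := by
          simpa [isPath_iff_isSubwalk_imp_nil] using hp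
        have hc₀ : 0 < c.length := by
          cases c
          · simp at hc
          · simp
        have hlen : (cons hxy (a.append b)).length + c.length =
            (cons hxy ((a.append c).append b)).length := by
          simp only [length_cons, length_append]
          omega
        rcases Nat.even_or_odd c.length with hc_even | hc_odd
        · obtain ⟨y, d, hd, hd_odd, hd_le⟩ := ih (cons hxy (a.append b)).length (by omega)
            (cons hxy (a.append b)) (Nat.odd_add.mp (hlen ▸ hw) |>.mpr hc_even) rfl
          exact ⟨y, d, hd, hd_odd, by omega⟩
        · obtain ⟨y, d, hd, hd_odd, hd_le⟩ :=
            ih c.length (by rw [← hlen, length_cons]; omega) c hc_odd rfl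
          exact ⟨y, d, hd, hd_odd, by omega⟩

theorem oddGirthAtLeast_iff_forall_odd_closed_walk {n : ℕ} :
    oddGirthAtLeast G n ↔ ∀ (x : V) (w : G.Walk x x), Odd w.length → n ≤ w.length := by
  refine ⟨fun h x w hw => ?_, fun h x w _ hw => h x w hw⟩
  obtain ⟨y, c, hc, hc_odd, hc_le⟩ := w.exists_isCycle_odd_length_le hw
  exact (h y c hc hc_odd).trans hc_le

theorem Walk.exists_sum_natAbs_le_length {ι A : Type*} [Fintype ι] [DecidableEq ι]
    [AddCommGroup A] (π : (ι → ℤ) →+ A) (φ : V → A)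
    (hφ : ∀ x y, G.Adj x y →
      ∃ i, φ y = φ x + π (Pi.single i 1) ∨ φ x = φ y + π (Pi.single i 1))
    {x y : V} (w : G.Walk x y) :
    ∃ z : ι → ℤ, π z = φ y - φ x ∧
      ∑ i, (z i).natAbs ≤ w.length ∧ ∑ i, (z i).natAbs ≡ w.length [MOD 2] := by
  induction w with
  | nil => exact ⟨0, by simp, by simp, by simp [Nat.ModEq]⟩
  | @cons x y v hxy w ih =>
    obtain ⟨z, hz, hle, hmod⟩ := ih
    obtain ⟨i, ε, hε, hstep⟩ :
        ∃ i, ∃ ε : ℤ, ε.natAbs = 1 ∧ φ y = φ x + π (Pi.single i ε) := by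
      obtain ⟨i, h | h⟩ := hφ x y hxy
      · exact ⟨i, 1, rfl, h⟩
      · exact ⟨i, -1, rfl, by rw [h, Pi.single_neg, map_neg]; abel⟩
    have hsum : ∑ j, ((z + Pi.single i ε : ι → ℤ) j).natAbs + (z i).natAbs =
        ∑ j, (z j).natAbs + (z i + ε).natAbs := by
      rw [← Finset.add_sum_erase _ _ (Finset.mem_univ i),
        ← Finset.add_sum_erase _ _ (Finset.mem_univ i),
        Finset.sum_congr rfl fun j hj => by
          rw [Pi.add_apply, Pi.single_eq_of_ne (Finset.ne_of_mem_erase hj), add_zero]]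
      simp only [Pi.add_apply, Pi.single_eq_same]
      ring
    refine ⟨z + Pi.single i ε, by rw [map_add, hz, hstep]; abel, ?_, ?_⟩ <;>
      simp only [length_cons, Nat.ModEq] at hmod ⊢ <;> omega

end SimpleGraph

namespace TGraph

variable {k p q r : ℕ}

lemma ne_of_tAdjBase {x y : TVert k p q r} (h : TAdjBase k p q r x y) : x ≠ y := by
  rintro rfl
  rcases x with a | ⟨i, j⟩
  · obtain ⟨i, -, hi⟩ := h
    fin_cases i <;> simp [pathEnds, Prod.ext_iff] at hi <;>
      exact absurd (hi.1.trans hi.2.symm) (by decide)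
  · obtain ⟨-, h⟩ := h
    omega

lemma adj_iff {x y : TVert k p q r} :
    (TGraph k p q r).Adj x y ↔ TAdjBase k p q r x y ∨ TAdjBase k p q r y x := by
  rw [TGraph, fromRel_adj, and_iff_right_iff_imp]
  rintro (h | h)
  exacts [ne_of_tAdjBase h, (ne_of_tAdjBase h).symm]

/- `Sum.inl a` has type `Fin 3 ⊕ _` rather than `TVert k p q r`, which makes walks between such
vertices inaccessible to `rw` and `simp`. -/
variable (k p q r) in
def mainVertex (a : Fin 3) : TVert k p q r := .inl a

variable (k p q r) in
def pathVertex (i : Fin 6) (t : ℕ) : TVert k p q r :=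
  if h₀ : t = 0 then mainVertex k p q r (pathEnds i).1
  else if h : t < pathLen k p q r i then .inr ⟨i, ⟨t - 1, by omega⟩⟩
  else mainVertex k p q r (pathEnds i).2

lemma adj_pathVertex (i : Fin 6) {t : ℕ} (ht : t < pathLen k p q r i) :
    (TGraph k p q r).Adj (pathVertex k p q r i t) (pathVertex k p q r i (t + 1)) := by
  rw [adj_iff]
  rcases t with _ | t
  · by_cases h₁ : 1 < pathLen k p q r i
    · left
      simp [pathVertex, mainVertex, h₁, TAdjBase]
    · left
      simp [pathVertex, mainVertex, h₁, TAdjBase]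
      exact ⟨i, by omega, rfl⟩
  · by_cases h₂ : t + 2 < pathLen k p q r i
    · left
      simp [pathVertex, ht, h₂, TAdjBase]
    · right
      simp [pathVertex, mainVertex, ht, h₂, TAdjBase]
      omega

variable (k p q r) in
def pathWalk (i : Fin 6) (hi : 0 < pathLen k p q r i) {a b : Fin 3} (hab : pathEnds i = (a, b)) :
    (TGraph k p q r).Walk (mainVertex k p q r a) (mainVertex k p q r b) :=
  (Walk.ofSupport ((List.range (pathLen k p q r i + 1)).map (pathVertex k p q r i)) (by simp)
    (by rw [List.isChain_map, List.isChain_range_succ]; exact fun t => adj_pathVertex i)).copy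
    (by simp [pathVertex, hab]) (by simp [pathVertex, hi.ne', hab])

lemma length_pathWalk (i : Fin 6) (hi : 0 < pathLen k p q r i) {a b : Fin 3}
    (hab : pathEnds i = (a, b)) : (pathWalk k p q r i hi hab).length = pathLen k p q r i := by
  simp [pathWalk]

variable (k p q r) in
def triangleWalk (hp : 0 < p) (hq : 0 < q) (hr : 0 < r) :
    (TGraph k p q r).Walk (mainVertex k p q r 0) (mainVertex k p q r 0) :=
  (pathWalk k p q r 0 hp rfl).append
    ((pathWalk k p q r 4 hr rfl).append (pathWalk k p q r 2 hq rfl).reverse)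

lemma length_triangleWalk (hp : 0 < p) (hq : 0 < q) (hr : 0 < r) :
    (triangleWalk k p q r hp hq hr).length = p + q + r := by
  simp only [triangleWalk, Walk.length_append, Walk.length_reverse]
  have hu := length_pathWalk (k := k) (q := q) (r := r) 0 hp rfl
  have hv := length_pathWalk (k := k) (p := p) (q := q) 4 hr rfl
  have hw := length_pathWalk (k := k) (p := p) (r := r) 2 hq rfl
  simp only [pathLen, Matrix.cons_val] at hu hv hw
  omega

/-- Conservation at `u` and `v` (hence at `w`) of an integer flow `x i` along each path `i`,
oriented from `(pathEnds i).1` to `(pathEnds i).2`. -/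
def IsCirculation (x : Fin 6 → ℤ) : Prop :=
  x 0 + x 1 + x 2 + x 3 = 0 ∧ x 0 + x 1 = x 4 + x 5

variable (k p q r) in
def cycleLattice : AddSubgroup (Fin 6 → ℤ) where
  carrier := {z | ∃ x, IsCirculation x ∧ z = fun i => x i * pathLen k p q r i}
  zero_mem' := ⟨0, by simp [IsCirculation], by ext; simp⟩
  add_mem' := by
    rintro _ _ ⟨x, ⟨hx₁, hx₂⟩, rfl⟩ ⟨y, ⟨hy₁, hy₂⟩, rfl⟩
    exact ⟨x + y, ⟨by simp; linarith, by simp; linarith⟩, by ext; simp; ring⟩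
  neg_mem' := by
    rintro _ ⟨x, ⟨hx₁, hx₂⟩, rfl⟩
    exact ⟨-x, ⟨by simp; linarith, by simp; linarith⟩, by ext; simp⟩

variable (k p q r) in
/-- `v` is reached from `u` along path `0`, and `w` along path `2`. -/
def cornerPosition : Fin 3 → Fin 6 → ℤ :=
  ![0, Pi.single 0 (pathLen k p q r 0 : ℤ), Pi.single 2 (pathLen k p q r 2 : ℤ)]

variable (k p q r) in
def potential : TVert k p q r → (Fin 6 → ℤ) ⧸ cycleLattice k p q r
  | .inl a => ↑(cornerPosition k p q r a)
  | .inr ⟨i, j⟩ =>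
    ↑(cornerPosition k p q r (pathEnds i).1 + (Pi.single i ((j : ℤ) + 1) : Fin 6 → ℤ))

lemma potential_end (i : Fin 6) :
    (cornerPosition k p q r (pathEnds i).2 : (Fin 6 → ℤ) ⧸ cycleLattice k p q r) =
      ↑(cornerPosition k p q r (pathEnds i).1 +
        (Pi.single i (pathLen k p q r i : ℤ) : Fin 6 → ℤ)) := by
  rw [QuotientAddGroup.eq]
  -- the closed route through path `i` whose ends are joined to `u` by paths `0` and `2`
  refine ⟨![0, ![-1, 1, 0, 0, 0, 0], 0, ![0, 0, -1, 1, 0, 0], ![1, 0, -1, 0, 1, 0],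
    ![1, 0, -1, 0, 0, 1]] i, ?_, ?_⟩ <;> fin_cases i <;> simp [IsCirculation] <;>
    ext j <;> fin_cases j <;> simp [cornerPosition, pathEnds]

lemma potential_step {x y : TVert k p q r} (h : TAdjBase k p q r x y) :
    ∃ i, potential k p q r y = potential k p q r x + ↑(Pi.single i 1 : Fin 6 → ℤ) ∨
      potential k p q r x = potential k p q r y + ↑(Pi.single i 1 : Fin 6 → ℤ) := by
  rcases x with a | ⟨i, j⟩ <;> rcases y with b | ⟨i', j'⟩
  · obtain ⟨i, hi, hab⟩ := h
    have := potential_end (k := k) (p := p) (q := q) (r := r) i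
    simp only [hab, hi] at this
    exact ⟨i, .inl (by simpa [potential] using this)⟩
  · rcases h with ⟨hj, rfl⟩ | ⟨hj, rfl⟩
    · exact ⟨i', .inl (by simp [potential, hj])⟩
    · refine ⟨i', .inr ?_⟩
      rw [potential, potential_end, ← hj]
      simp [potential, ← QuotientAddGroup.mk_add, add_assoc, ← Pi.single_add]
  · exact h.elim
  · obtain ⟨rfl, hj⟩ := h
    exact ⟨i, .inl (by simp [potential, hj, ← QuotientAddGroup.mk_add, add_assoc,
      ← Pi.single_add])⟩

lemma potential_adj {x y : TVert k p q r} (h : (TGraph k p q r).Adj x y) :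
    ∃ i, potential k p q r y = potential k p q r x + ↑(Pi.single i 1 : Fin 6 → ℤ) ∨
      potential k p q r x = potential k p q r y + ↑(Pi.single i 1 : Fin 6 → ℤ) := by
  rcases adj_iff.mp h with h | h
  · exact potential_step h
  · obtain ⟨i, hi⟩ := potential_step h
    exact ⟨i, hi.symm⟩

lemma le_sum_natAbs_mul_pathLen {x : Fin 6 → ℤ} (hx : IsCirculation x)
    (hp : p ≤ k) (hq : q ≤ k) (hr : r ≤ k) (hsum : 2 * k + 1 ≤ p + q + r)
    (hodd : Odd (∑ i, (x i).natAbs * pathLen k p q r i)) :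
    2 * k + 1 ≤ ∑ i, (x i).natAbs * pathLen k p q r i := by
  obtain ⟨hu, hv⟩ := hx
  simp only [Fin.sum_univ_six, pathLen, Matrix.cons_val] at hodd ⊢
  obtain ⟨p', hp', hpp'⟩ : ∃ p', 2 * k + 1 - p = p' ∧ p + p' = 2 * k + 1 := ⟨_, rfl, by omega⟩
  obtain ⟨q', hq', hqq'⟩ : ∃ q', 2 * k + 1 - q = q' ∧ q + q' = 2 * k + 1 := ⟨_, rfl, by omega⟩
  obtain ⟨r', hr', hrr'⟩ : ∃ r', 2 * k + 1 - r = r' ∧ r + r' = 2 * k + 1 := ⟨_, rfl, by omega⟩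
  rw [hp', hq', hr'] at hodd ⊢
  by_cases hs : x 0 + x 1 = 0
  · have h₁ : (x 1).natAbs = (x 0).natAbs := by omega
    have h₃ : (x 3).natAbs = (x 2).natAbs := by omega
    have h₅ : (x 5).natAbs = (x 4).natAbs := by omega
    have hdigons : (x 0).natAbs * p + (x 1).natAbs * p' + (x 2).natAbs * q + (x 3).natAbs * q' +
        (x 4).natAbs * r + (x 5).natAbs * r' =
        ((x 0).natAbs + (x 2).natAbs + (x 4).natAbs) * (2 * k + 1) := by
      rw [h₁, h₃, h₅]
      linear_combination (x 0).natAbs * hpp' + (x 2).natAbs * hqq' + (x 4).natAbs * hrr'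
    rw [hdigons] at hodd ⊢
    refine Nat.le_mul_of_pos_left _ (Nat.pos_of_ne_zero fun h => ?_)
    simp [h] at hodd
  · have hpair {a b P P' : ℕ} (hP : P ≤ P') (hab : 1 ≤ a + b) : P ≤ a * P + b * P' := by
      nlinarith
    have hp_pair := hpair (a := (x 0).natAbs) (b := (x 1).natAbs) (P := p) (P' := p')
      (by omega) (by omega)
    have hq_pair := hpair (a := (x 2).natAbs) (b := (x 3).natAbs) (P := q) (P' := q')
      (by omega) (by omega)
    have hr_pair := hpair (a := (x 4).natAbs) (b := (x 5).natAbs) (P := r) (P' := r')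
      (by omega) (by omega)
    omega

theorem le_length_of_odd_length (hp : p ≤ k) (hq : q ≤ k) (hr : r ≤ k)
    (hsum : 2 * k + 1 ≤ p + q + r) {v : TVert k p q r} (w : (TGraph k p q r).Walk v v)
    (hw : Odd w.length) : 2 * k + 1 ≤ w.length := by
  obtain ⟨z, hz, hle, hmod⟩ := w.exists_sum_natAbs_le_length
    (QuotientAddGroup.mk' (cycleLattice k p q r)) (potential k p q r) fun _ _ => potential_adj
  rw [sub_self, QuotientAddGroup.mk'_apply, QuotientAddGroup.eq_zero_iff] at hz
  obtain ⟨x, hx, rfl⟩ := hz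
  simp only [Int.natAbs_mul, Int.natAbs_natCast] at hle hmod
  have hodd : Odd (∑ i, (x i).natAbs * pathLen k p q r i) :=
    Nat.odd_iff.mpr (Eq.trans hmod (Nat.odd_iff.mp hw))
  exact (le_sum_natAbs_mul_pathLen hx hp hq hr hsum hodd).trans hle

end TGraph

theorem odd_case_TGraph_oddGirth_general (k p q r : ℕ)
    (hp : 1 ≤ p) (hp' : p ≤ k) (hq : 1 ≤ q) (hq' : q ≤ k)
    (hr : 1 ≤ r) (hr' : r ≤ k) (hodd : Odd (p + q + r)) :
    oddGirthAtLeast (TGraph k p q r) (2*k+1) ↔ 2*k+1 ≤ p + q + r := by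
  rw [oddGirthAtLeast_iff_forall_odd_closed_walk]
  refine ⟨fun h => ?_, fun hsum _ w hw => TGraph.le_length_of_odd_length hp' hq' hr' hsum w hw⟩
  have hlen := TGraph.length_triangleWalk (k := k) hp hq hr
  exact hlen ▸ h _ (TGraph.triangleWalk k p q r hp hq hr) (hlen ▸ hodd)

theorem odd_case_TGraph_oddGirth (k p q r : ℕ) (hk : 1 ≤ k)
    (hp : 1 ≤ p) (hp' : p ≤ k) (hq : 1 ≤ q) (hq' : q ≤ k)
    (hr : 1 ≤ r) (hr' : r ≤ k) (hodd : Odd (p + q + r)) :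
    oddGirthAtLeast (TGraph k p q r) (2*k+1) ↔ 2*k+1 ≤ p + q + r :=
  odd_case_TGraph_oddGirth_general k p q r hp hp' hq hq' hr hr' hodd
end

section
/- Let G and H be graphs, both of odd-girth 2k+1, and let φ : G → H be a graph homomorphism. If u and v are two vertices of G lying on a common cycle of length 2k+1 in G, then d_H(φ(u), φ(v)) = d_G(u, v). -/
/-!
Split the `(2k+1)`-cycle at `u` and `v` into two arcs `p : u → v` and `q : v → u`. In a graph of
odd girth at least `2k+1`, `d(u, v) = min |p| |q|`: a shorter walk `r` would close up with one of
the arcs into a closed walk of odd length `< 2k+1`, and every odd closed walk contains an odd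
cycle no longer than itself. A homomorphism maps the arcs to arcs of the same lengths, so both
distances equal the same minimum.
-/

open SimpleGraph

/-- `G` has odd-girth exactly `n`. -/
def hasOddGirth {V : Type*} (G : SimpleGraph V) (n : ℕ) : Prop :=
  oddGirthAtLeast G n ∧ ∃ (x : V) (w : G.Walk x x), w.IsCycle ∧ w.length = n

namespace SimpleGraph.Walk

variable {V : Type*} {G : SimpleGraph V}

lemma exists_eq_append_append_of_not_isPath {a b : V} (p : G.Walk a b) (hp : ¬ p.IsPath) :
    ∃ (y : V) (p₁ : G.Walk a y) (q : G.Walk y y) (p₂ : G.Walk y b),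
      ¬ q.Nil ∧ p = p₁.append (q.append p₂) := by
  induction p with
  | nil => exact absurd IsPath.nil hp
  | @cons a z b h p ih =>
    by_cases ha : a ∈ p.support
    · obtain ⟨p₁, p₂, rfl⟩ := mem_support_iff_exists_append.mp ha
      exact ⟨a, nil, cons h p₁, p₂, not_nil_cons, by simp⟩
    · have hp' : ¬ p.IsPath := fun hp' ↦ hp (hp'.cons ha)
      obtain ⟨y, p₁, q, p₂, hq, rfl⟩ := ih hp'
      exact ⟨y, cons h p₁, q, p₂, hq, rfl⟩

theorem exists_isCycle_odd_length_le_s4 {x : V} (c : G.Walk x x) (hc : Odd c.length) :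
    ∃ (y : V) (d : G.Walk y y), d.IsCycle ∧ Odd d.length ∧ d.length ≤ c.length := by
  induction hn : c.length using Nat.strong_induction_on generalizing x with
  | _ n ih =>
  cases c with
  | nil => simp at hc
  | cons h p =>
    by_cases hp : p.IsPath
    · refine ⟨x, cons h p, isCycle_iff_isPath_tail_and_le_length.mpr ⟨by simpa using hp, ?_⟩,
        hc, hn.le⟩
      have hp0 : p.length ≠ 0 := fun h0 ↦ h.ne (eq_of_length_eq_zero h0).symm
      rw [length_cons] at hc ⊢
      rcases hc with ⟨m, hm⟩
      omega
    · obtain ⟨y, p₁, q, p₂, hq, rfl⟩ := exists_eq_append_append_of_not_isPath p hp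
      have hq0 : q.length ≠ 0 := fun h0 ↦ hq (length_eq_zero_iff.mp h0)
      have hlen : (cons h (p₁.append p₂)).length + q.length = n := by
        rw [← hn]; simp only [length_cons, length_append]; omega
      have hsum : Odd ((cons h (p₁.append p₂)).length + q.length) := by rwa [hlen, ← hn]
      rcases Nat.even_or_odd q.length with hqe | hqo
      · obtain ⟨z, d, hd, hdo, hdl⟩ := ih _ (by omega) _ ((Nat.odd_add.mp hsum).mpr hqe) rfl
        exact ⟨z, d, hd, hdo, by omega⟩
      · obtain ⟨z, d, hd, hdo, hdl⟩ := ih _ (by simp only [length_cons] at hlen; omega) q hqo rfl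
        exact ⟨z, d, hd, hdo, by omega⟩

lemma exists_length_add_length_eq_of_mem_support {x u v : V} (c : G.Walk x x)
    (hu : u ∈ c.support) (hv : v ∈ c.support) :
    ∃ (p : G.Walk u v) (q : G.Walk v u), p.length + q.length = c.length := by
  classical
  obtain ⟨p, q, hpq⟩ := mem_support_iff_exists_append.mp
    ((c.mem_support_rotate_iff u hu).mpr hv)
  exact ⟨p, q, by rw [← length_append, ← hpq, length_rotate]⟩

end SimpleGraph.Walk

section OddGirth

variable {V : Type*} {G : SimpleGraph V}

lemma oddGirthAtLeast.le_length_of_odd {n : ℕ} (hG : oddGirthAtLeast G n) {x : V}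
    (c : G.Walk x x) (hc : Odd c.length) : n ≤ c.length := by
  obtain ⟨y, d, hd, hdo, hdl⟩ := c.exists_isCycle_odd_length_le_s4 hc
  exact (hG y d hd hdo).trans hdl

lemma oddGirthAtLeast.dist_eq_min {k : ℕ} (hG : oddGirthAtLeast G (2 * k + 1)) {u v : V}
    (p : G.Walk u v) (q : G.Walk v u) (hpq : p.length + q.length = 2 * k + 1) :
    G.dist u v = min p.length q.length := by
  obtain ⟨r, hr⟩ := p.reachable.exists_walk_length_eq_dist
  have hp : G.dist u v ≤ p.length := dist_le p
  have hq : G.dist u v ≤ q.length := dist_comm (G := G) ▸ dist_le q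
  have hodd : Odd (p.append r.reverse).length ∨ Odd (r.append q).length := by
    simp only [Walk.length_append, Walk.length_reverse, Nat.odd_iff]
    omega
  rcases hodd with h | h
  · have := hG.le_length_of_odd _ h
    simp only [Walk.length_append, Walk.length_reverse] at this
    omega
  · have := hG.le_length_of_odd _ h
    simp only [Walk.length_append] at this
    omega

end OddGirth

theorem hom_preserves_dist_on_cycle_general {V W : Type*}
    (G : SimpleGraph V) (H : SimpleGraph W) (k : ℕ)
    (hG : hasOddGirth G (2*k+1)) (hH : hasOddGirth H (2*k+1))
    (φ : G →g H) (u v : V)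
    (hcyc : ∃ (x : V) (w : G.Walk x x),
      w.IsCycle ∧ w.length = 2*k+1 ∧ u ∈ w.support ∧ v ∈ w.support) :
    H.dist (φ u) (φ v) = G.dist u v := by
  obtain ⟨x, w, -, hw, hu, hv⟩ := hcyc
  obtain ⟨p, q, hpq⟩ := w.exists_length_add_length_eq_of_mem_support hu hv
  rw [hw] at hpq
  have hpqH : (p.map φ).length + (q.map φ).length = 2 * k + 1 := by
    simpa only [Walk.length_map] using hpq
  rw [hG.1.dist_eq_min p q hpq, hH.1.dist_eq_min _ _ hpqH, Walk.length_map, Walk.length_map]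

/-- If `G` and `H` both have odd-girth `2k+1`, `φ : G → H` is a homomorphism and
`u, v` lie on a common `(2k+1)`-cycle of `G`, then `d_H(φ u, φ v) = d_G(u, v)`. -/
theorem hom_preserves_dist_on_cycle {V W : Type*}
    (G : SimpleGraph V) (H : SimpleGraph W) (k : ℕ) (hk : 1 ≤ k)
    (hG : hasOddGirth G (2*k+1)) (hH : hasOddGirth H (2*k+1))
    (φ : G →g H) (u v : V)
    (hcyc : ∃ (x : V) (w : G.Walk x x),
      w.IsCycle ∧ w.length = 2*k+1 ∧ u ∈ w.support ∧ v ∈ w.support) :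
    H.dist (φ u) (φ v) = G.dist u v :=
  hom_preserves_dist_on_cycle_general G H k hG hH φ u v hcyc
end

section
/- A graph is K_4-minor-free if and only if it is a subgraph of some 2-tree. -/
/-!
A 2-tree has no `K₄` minor: its last vertex has only two earlier neighbours, and these are
adjacent, so the vertex can be removed from any `K₄` model; induct along the enumeration.

Conversely (Dirac), a finite `K₄`-minor-free graph has a vertex of degree at most two.
Otherwise take a smallest counterexample, so that all vertices have degree at least three.
Every minor obtained by contracting an edge and deleting vertices has a vertex of degree at
most two, and comparing degrees shows that every edge lies in a triangle. Deleting one vertex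
yields a vertex `v` of degree exactly three. Its three neighbours then either form a
triangle, which gives a `K₄`, or a path `b - a - c`; the path is excluded by contracting `vb`,
or, when `N(a) = {v, b, c}`, by contracting `vb` and deleting `a`.
Now contract such a vertex `v` into a neighbour, embed the result into a 2-tree by induction,
and reattach `v` as a new vertex over the edge spanned by its (at most two) neighbours.
-/

open SimpleGraph

/-- `G` has a `K₄` minor: there are four nonempty, pairwise disjoint, connected
branch sets with an edge of `G` between every two of them. -/
def HasK4Minor {V : Type*} (G : SimpleGraph V) : Prop :=
  ∃ S : Fin 4 → Set V,
    (∀ i, (S i).Nonempty) ∧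
    (∀ i, (G.induce (S i)).Connected) ∧
    (Pairwise fun i j => Disjoint (S i) (S j)) ∧
    (Pairwise fun i j => ∃ a ∈ S i, ∃ b ∈ S j, G.Adj a b)

/-- A graph is a 2-tree if its vertices can be enumerated `v₀, v₁, …, v_{n-1}` so that
`v₀v₁` is an edge and each `vᵢ` (`i ≥ 2`) is adjacent, among the earlier vertices,
to exactly two vertices, which are themselves adjacent. -/
def IsTwoTree {V : Type*} (G : SimpleGraph V) : Prop :=
  ∃ (n : ℕ) (hn : 2 ≤ n) (e : Fin n ≃ V),
    G.Adj (e ⟨0, by omega⟩) (e ⟨1, by omega⟩) ∧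
    ∀ i : Fin n, 2 ≤ (i : ℕ) →
      ∃ j l : Fin n, j < i ∧ l < i ∧ j ≠ l ∧ G.Adj (e j) (e l) ∧
        ∀ m : Fin n, m < i → (G.Adj (e m) (e i) ↔ m = j ∨ m = l)

namespace SimpleGraph

variable {V W : Type*} {G : SimpleGraph V} {H : SimpleGraph W}

structure IsK4Model (G : SimpleGraph V) (S : Fin 4 → Set V) : Prop where
  nonempty : ∀ i, (S i).Nonempty
  connected : ∀ i, (G.induce (S i)).Connected
  disjoint : Pairwise fun i j => Disjoint (S i) (S j)
  exists_adj : Pairwise fun i j => ∃ a ∈ S i, ∃ b ∈ S j, G.Adj a b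

theorem hasK4Minor_iff_exists_isK4Model : HasK4Minor G ↔ ∃ S, G.IsK4Model S :=
  ⟨fun ⟨S, h₁, h₂, h₃, h₄⟩ => ⟨S, h₁, h₂, h₃, h₄⟩, fun ⟨S, h₁, h₂, h₃, h₄⟩ => ⟨S, h₁, h₂, h₃, h₄⟩⟩

theorem induce_connected_of_reachable_map {S : Set W} {T : Set V} (f : W → V)
    (hS : (H.induce S).Connected) (hST : Set.MapsTo f S T)
    (hadj : ∀ x y (hx : x ∈ S) (hy : y ∈ S), H.Adj x y →
      (G.induce T).Reachable ⟨f x, hST hx⟩ ⟨f y, hST hy⟩)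
    (hcover : ∀ t (ht : t ∈ T), ∃ s, ∃ hs : s ∈ S,
      (G.induce T).Reachable ⟨t, ht⟩ ⟨f s, hST hs⟩) :
    (G.induce T).Connected := by
  have hreach (x y : S) (hxy : (H.induce S).Reachable x y) :
      (G.induce T).Reachable ⟨f x, hST x.2⟩ ⟨f y, hST y.2⟩ := by
    obtain ⟨p⟩ := hxy
    induction p with
    | nil => rfl
    | @cons u v _ h _ ih => exact (hadj u v u.2 v.2 h).trans ih
  obtain ⟨s₀⟩ := hS.nonempty
  have : Nonempty T := ⟨⟨f s₀, hST s₀.2⟩⟩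
  refine Connected.mk fun ⟨t₁, ht₁⟩ ⟨t₂, ht₂⟩ => ?_
  obtain ⟨s₁, hs₁, h₁⟩ := hcover t₁ ht₁
  obtain ⟨s₂, hs₂, h₂⟩ := hcover t₂ ht₂
  exact h₁.trans ((hreach ⟨s₁, hs₁⟩ ⟨s₂, hs₂⟩ (hS.preconnected _ _)).trans h₂.symm)

theorem HasK4Minor.map (f : H →g G) (hf : Function.Injective f) (h : HasK4Minor H) :
    HasK4Minor G := by
  obtain ⟨S, hS⟩ := hasK4Minor_iff_exists_isK4Model.1 h
  refine hasK4Minor_iff_exists_isK4Model.2 ⟨fun i => f '' S i, ⟨fun i => (hS.nonempty i).image f,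
    fun i => ?_, fun i j hij => (Set.disjoint_image_iff hf).2 (hS.disjoint hij),
    fun i j hij => ?_⟩⟩
  · refine induce_connected_of_reachable_map f (hS.connected i) (Set.mapsTo_image f _)
      (fun x y _ _ hxy => Adj.reachable (f.map_adj hxy)) ?_
    rintro _ ⟨s, hs, rfl⟩
    exact ⟨s, hs, .rfl⟩
  · obtain ⟨a, ha, b, hb, hab⟩ := hS.exists_adj hij
    exact ⟨f a, Set.mem_image_of_mem f ha, f b, Set.mem_image_of_mem f hb, f.map_adj hab⟩

theorem hasK4Minor_of_pairwise_adj (a : Fin 4 → V) (ha : Pairwise fun i j => G.Adj (a i) (a j)) :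
    HasK4Minor G :=
  hasK4Minor_iff_exists_isK4Model.2 ⟨fun i => {a i}, ⟨fun i => Set.singleton_nonempty _,
    fun i => by rw [induce_singleton_eq_top]; exact connected_top,
    fun i j hij => Set.disjoint_singleton.2 (ha hij).ne,
    fun i j hij => ⟨a i, rfl, a j, rfl, ha hij⟩⟩⟩

theorem hasK4Minor_of_adj {a b c d : V} (hab : G.Adj a b) (hac : G.Adj a c) (had : G.Adj a d)
    (hbc : G.Adj b c) (hbd : G.Adj b d) (hcd : G.Adj c d) : HasK4Minor G := by
  refine hasK4Minor_of_pairwise_adj ![a, b, c, d] fun i j hij => ?_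
  fin_cases i <;> fin_cases j
  all_goals first
    | exact absurd rfl hij
    | assumption
    | exact Adj.symm (by assumption)

/-- The graph on `Dᶜ` in which `w` also inherits the neighbours of `v`. For `v ∈ D` adjacent
to `w` this is the minor of `G` obtained by contracting `vw` into `w` and deleting the rest
of `D`. -/
def contractInto (G : SimpleGraph V) (D : Set V) (v w : V) : SimpleGraph ↥Dᶜ :=
  fromRel fun x y => G.Adj x y ∨ (x.1 = w ∧ G.Adj v y)

section contractInto

variable {D : Set V} {v w : V} {x y : ↥Dᶜ}

theorem contractInto_adj : (G.contractInto D v w).Adj x y ↔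
    x ≠ y ∧ (G.Adj x y ∨ (x.1 = w ∧ G.Adj v y) ∨ (y.1 = w ∧ G.Adj v x)) := by
  simp only [contractInto, fromRel_adj, G.adj_comm y.1]
  tauto

theorem contractInto_adj_of_adj (h : G.Adj x y) : (G.contractInto D v w).Adj x y :=
  contractInto_adj.2 ⟨fun hxy => h.ne (congrArg Subtype.val hxy), Or.inl h⟩

theorem contractInto_adj_of_eq (hx : x.1 = w) (hy : G.Adj v y) (hxy : x ≠ y) :
    (G.contractInto D v w).Adj x y :=
  contractInto_adj.2 ⟨hxy, Or.inr (Or.inl ⟨hx, hy⟩)⟩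

theorem HasK4Minor.of_contractInto (hv : v ∈ D) (hvw : G.Adj v w ∨ w ∈ D)
    (h : HasK4Minor (G.contractInto D v w)) : HasK4Minor G := by
  by_cases hw : w ∈ D
  · refine h.map ⟨Subtype.val, fun {x y} hxy => ?_⟩ Subtype.val_injective
    rcases contractInto_adj.1 hxy with ⟨-, hxy | ⟨hx, -⟩ | ⟨hy, -⟩⟩
    · exact hxy
    · exact absurd (hx ▸ x.2) (not_not.2 hw)
    · exact absurd (hy ▸ y.2) (not_not.2 hw)
  replace hvw := hvw.resolve_right hw
  obtain ⟨S, hS⟩ := hasK4Minor_iff_exists_isK4Model.1 h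
  -- `v` joins the branch set containing `w`
  let T i : Set V := Subtype.val '' S i ∪ {x | x = v ∧ ⟨w, hw⟩ ∈ S i}
  have hval {i} {x : ↥Dᶜ} (hx : x ∈ S i) : x.1 ∈ T i := Or.inl ⟨x, hx, rfl⟩
  have hvT {i} {x : ↥Dᶜ} (hx : x ∈ S i) (hxw : x.1 = w) : v ∈ T i :=
    Or.inr ⟨rfl, (Subtype.ext hxw : x = ⟨w, hw⟩) ▸ hx⟩
  refine hasK4Minor_iff_exists_isK4Model.2 ⟨T, ⟨fun i => ?_, fun i => ?_, fun i j hij => ?_,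
    fun i j hij => ?_⟩⟩
  · obtain ⟨x, hx⟩ := hS.nonempty i
    exact ⟨x, hval hx⟩
  · have hpath {a b c : V} (ha : a ∈ T i) (hb : b ∈ T i) (hc : c ∈ T i) (hab : G.Adj a b)
        (hbc : G.Adj b c) : (G.induce (T i)).Reachable ⟨a, ha⟩ ⟨c, hc⟩ :=
      Reachable.trans (v := ⟨b, hb⟩) (Adj.reachable (by exact hab)) (Adj.reachable (by exact hbc))
    refine induce_connected_of_reachable_map Subtype.val (hS.connected i) (fun x hx => hval hx)
      (fun x y hx hy hxy => ?_) ?_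
    · rcases contractInto_adj.1 hxy with ⟨-, hxy | ⟨hxw, hvy⟩ | ⟨hyw, hvx⟩⟩
      · exact Adj.reachable hxy
      · exact hpath _ (hvT hx hxw) _ (hxw ▸ hvw.symm) hvy
      · exact hpath _ (hvT hy hyw) _ hvx.symm (hyw ▸ hvw)
    · rintro _ (⟨x, hx, rfl⟩ | ⟨rfl, hwS⟩)
      · exact ⟨x, hx, .rfl⟩
      · exact ⟨⟨w, hw⟩, hwS, Adj.reachable hvw⟩
  · refine Set.disjoint_left.2 ?_
    rintro _ (⟨x, hx, rfl⟩ | ⟨rfl, hwi⟩) (⟨y, hy, hyx⟩ | ⟨hxv, hwj⟩)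
    · exact (hS.disjoint hij).ne_of_mem hx hy (Subtype.ext hyx.symm)
    · exact x.2 (hxv ▸ hv)
    · exact y.2 (hyx ▸ hv)
    · exact (hS.disjoint hij).ne_of_mem hwi hwj rfl
  · obtain ⟨x, hx, y, hy, hxy⟩ := hS.exists_adj hij
    rcases contractInto_adj.1 hxy with ⟨-, hxy | ⟨hxw, hvy⟩ | ⟨hyw, hvx⟩⟩
    · exact ⟨x, hval hx, y, hval hy, hxy⟩
    · exact ⟨v, hvT hx hxw, y, hval hy, hvy⟩
    · exact ⟨x, hval hx, v, hvT hy hyw, hvx.symm⟩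

end contractInto

theorem reachable_induce_of_eq_or_adj {T : Set V} {a b : V} (ha : a ∈ T) (hb : b ∈ T)
    (h : a = b ∨ G.Adj a b) : (G.induce T).Reachable ⟨a, ha⟩ ⟨b, hb⟩ := by
  rcases h with rfl | h
  · rfl
  · exact Adj.reachable h

theorem IsK4Model.diff_singleton {S : Fin 4 → Set V} (hS : G.IsK4Model S) {v j l : V}
    (hjl : j ≠ l → G.Adj j l) (hN : ∀ i, ∀ x ∈ S i, G.Adj v x → x = j ∨ x = l) :
    G.IsK4Model fun i => S i \ {v} := by
  classical
  have hcl {x y : V} (hx : x = j ∨ x = l) (hy : y = j ∨ y = l) (hxy : x ≠ y) : G.Adj x y := by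
    rcases hx with rfl | rfl <;> rcases hy with rfl | rfl
    exacts [absurd rfl hxy, hjl hxy, (hjl (Ne.symm hxy)).symm, absurd rfl hxy]
  have hnbr (i) (hvi : v ∈ S i) : ∃ w ∈ S i, G.Adj v w := by
    by_cases hu : ∃ u ∈ S i, u ≠ v
    · obtain ⟨u, hu, huv⟩ := hu
      obtain ⟨p⟩ := (hS.connected i).preconnected ⟨v, hvi⟩ ⟨u, hu⟩
      cases p with
      | nil => exact absurd rfl huv
      | cons h _ => exact ⟨_, Subtype.coe_prop _, h⟩
    push Not at hu
    -- otherwise `S i = {v}`, and the three other branch sets would each contain `j` or `l`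
    have hb' : ∀ k, ∃ b, k ≠ i → b ∈ S k ∧ (b = j ∨ b = l) := by
      intro k
      by_cases hk : k = i
      · exact ⟨v, fun h => absurd hk h⟩
      obtain ⟨a, ha, b, hb, hab⟩ := hS.exists_adj (Ne.symm hk)
      exact ⟨b, fun _ => ⟨hb, hN k b hb (hu a ha ▸ hab)⟩⟩
    choose b hb using hb'
    have hcard : ({j, l} : Finset V).card < (Finset.univ.erase i).card := by
      rw [Finset.card_erase_of_mem (Finset.mem_univ i)]
      exact Finset.card_le_two.trans_lt (by simp)
    obtain ⟨k₁, hk₁, k₂, hk₂, hne, heq⟩ := Finset.exists_ne_map_eq_of_card_lt_of_maps_to hcard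
      (f := b) fun k hk => by simpa using (hb k (Finset.ne_of_mem_erase hk)).2
    exact absurd heq ((hS.disjoint hne).ne_of_mem (hb k₁ (Finset.ne_of_mem_erase hk₁)).1
      (hb k₂ (Finset.ne_of_mem_erase hk₂)).1)
  have hrepl {i k} (hik : i ≠ k) {a b : V} (ha : a ∈ S i) (hb : b ∈ S k) (hab : G.Adj a b)
      (hbv : b ≠ v) : ∃ a' ∈ S i \ {v}, G.Adj a' b := by
    by_cases hav : a = v
    · subst hav
      obtain ⟨w, hw, hvw⟩ := hnbr i ha
      exact ⟨w, ⟨hw, hvw.ne'⟩,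
        hcl (hN i w hw hvw) (hN k b hb hab) ((hS.disjoint hik).ne_of_mem hw hb)⟩
    · exact ⟨a, ⟨ha, hav⟩, hab⟩
  have hconn (i) : (G.induce (S i \ {v})).Connected := by
    by_cases hvi : v ∈ S i
    · obtain ⟨w, hw, hvw⟩ := hnbr i hvi
      have hf : Set.MapsTo (fun x => if x = v then w else x) (S i) (S i \ {v}) := by
        intro x hx
        dsimp only
        split_ifs with hxv
        exacts [⟨hw, hvw.ne'⟩, ⟨hx, hxv⟩]
      refine induce_connected_of_reachable_map _ (hS.connected i) hf
        (fun x y hx hy hxy => reachable_induce_of_eq_or_adj _ _ ?_)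
        (fun t ht => ⟨t, ht.1, reachable_induce_of_eq_or_adj _ _ (.inl (if_neg ht.2).symm)⟩)
      split_ifs with hxv hyv hyv
      · exact .inl rfl
      · subst hxv
        exact or_iff_not_imp_left.2 (hcl (hN i w hw hvw) (hN i y hy hxy))
      · subst hyv
        exact or_iff_not_imp_left.2 (hcl (hN i x hx hxy.symm) (hN i w hw hvw))
      · exact .inr hxy
    · rw [Set.sdiff_singleton_eq_self hvi]
      exact hS.connected i
  refine ⟨fun i => ?_, hconn, fun i k hik => ?_, fun i k hik => ?_⟩
  · obtain ⟨x⟩ := (hconn i).nonempty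
    exact ⟨x, x.2⟩
  · exact (hS.disjoint hik).mono Set.sdiff_subset Set.sdiff_subset
  · obtain ⟨a, ha, b, hb, hab⟩ := hS.exists_adj hik
    by_cases hbv : b = v
    · obtain ⟨b', hb', hb'a⟩ := hrepl (Ne.symm hik) hb ha hab.symm (hbv ▸ hab.ne)
      exact ⟨a, ⟨ha, hbv ▸ hab.ne⟩, b', hb', hb'a.symm⟩
    · obtain ⟨a', ha', ha'b⟩ := hrepl hik ha hb hab hbv
      exact ⟨a', ha', b, ⟨hb, hbv⟩, ha'b⟩

theorem IsTwoTree.not_hasK4Minor (hG : IsTwoTree G) : ¬HasK4Minor G := by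
  obtain ⟨n, -, e, -, hstep⟩ := hG
  suffices h : ∀ k S, G.IsK4Model S → (∀ i, ∀ x ∈ S i, (e.symm x : ℕ) < k) → False by
    intro hK
    obtain ⟨S, hS⟩ := hasK4Minor_iff_exists_isK4Model.1 hK
    exact h n S hS fun i x _ => (e.symm x).2
  intro k
  induction k with
  | zero =>
    intro S hS hk
    obtain ⟨x, hx⟩ := hS.nonempty 0
    exact absurd (hk 0 x hx) (Nat.not_lt_zero _)
  | succ k ih =>
    intro S hS hk
    by_cases hkn : n ≤ k
    · exact ih S hS fun i x _ => (e.symm x).2.trans_le hkn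
    push Not at hkn
    have hne {x : V} (hx : x ≠ e ⟨k, hkn⟩) : (e.symm x : ℕ) ≠ k :=
      fun h => hx (e.symm_apply_eq.1 (Fin.ext h))
    obtain ⟨j, l, hjl, hN⟩ : ∃ j l : Fin n, (j ≠ l → G.Adj (e j) (e l)) ∧
        ∀ m : Fin n, (m : ℕ) < k → G.Adj (e m) (e ⟨k, hkn⟩) → m = j ∨ m = l := by
      by_cases hk2 : 2 ≤ k
      · obtain ⟨j, l, -, -, -, hjl, hm⟩ := hstep ⟨k, hkn⟩ hk2
        exact ⟨j, l, fun _ => hjl, fun m hm' h => (hm m hm').1 h⟩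
      · exact ⟨⟨0, by omega⟩, ⟨0, by omega⟩, fun h => absurd rfl h,
          fun m hm _ => .inl (Fin.ext (show (m : ℕ) = 0 by omega))⟩
    refine ih _ (hS.diff_singleton (v := e ⟨k, hkn⟩) (fun h => hjl (ne_of_apply_ne e h)) ?_) ?_
    · intro i x hx hvx
      have hxk : (e.symm x : ℕ) < k := by
        have := hk i x hx
        have := hne hvx.ne'
        omega
      rcases hN _ hxk (by simpa using hvx.symm) with h | h
      · exact .inl (e.symm_apply_eq.1 h)
      · exact .inr (e.symm_apply_eq.1 h)
    · rintro i x ⟨hx, hxv⟩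
      have := hk i x hx
      have := hne hxv
      omega

def HasLowDegreeVertex (G : SimpleGraph V) : Prop :=
  ∃ v a b, G.neighborSet v ⊆ {a, b}

theorem contractInto_eq_or_eq_of_neighborSet_subset {D : Set V} {v w : V} {x p q : ↥Dᶜ}
    (h : (G.contractInto D v w).neighborSet x ⊆ {p, q}) {z : V} (hz : z ∉ D) (hxz : x.1 ≠ z)
    (hadj : G.Adj x z ∨ (x.1 = w ∧ G.Adj v z) ∨ (z = w ∧ G.Adj v x)) : z = p ∨ z = q := by
  have := h (contractInto_adj (y := ⟨z, hz⟩) |>.2 ⟨fun e => hxz (congrArg Subtype.val e), hadj⟩)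
  simpa [Subtype.ext_iff] using this

def ContractionsHaveLowDegreeVertex (G : SimpleGraph V) : Prop :=
  ∀ (D : Set V) (v w : V), v ∈ D → (G.Adj v w ∨ w ∈ D) → Dᶜ.Nonempty →
    (G.contractInto D v w).HasLowDegreeVertex

section LowDegree

variable {v w a b c : V}

theorem neighbors_subset_pair_or_exists_common_neighbor (hsmall : G.ContractionsHaveLowDegreeVertex)
    (hdeg : ∀ x a b, ∃ z, G.Adj x z ∧ z ≠ a ∧ z ≠ b) (hvw : G.Adj v w) :
    (∃ a b, ∀ z, z ≠ v → z ≠ w → (G.Adj v z ∨ G.Adj w z) → z = a ∨ z = b) ∨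
      ∃ x, x ≠ w ∧ G.Adj v x ∧ G.Adj w x ∧ ∃ c, ∀ z, G.Adj x z → z = v ∨ z = w ∨ z = c := by
  obtain ⟨x, p, q, hx⟩ := hsmall {v} v w rfl (.inl hvw) ⟨w, hvw.ne'⟩
  have key := fun {z : V} (hz : z ≠ v) => contractInto_eq_or_eq_of_neighborSet_subset hx (z := z) hz
  have hxv : x.1 ≠ v := x.2
  by_cases hxw : x.1 = w
  · refine .inl ⟨p, q, fun z hzv hzw h => key hzv (hxw ▸ Ne.symm hzw) ?_⟩
    rcases h with h | h
    · exact .inr (.inl ⟨hxw, h⟩)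
    · exact .inl (hxw ▸ h)
  by_cases hvx : G.Adj v x
  · have hN : ∀ z, G.Adj x z → z = v ∨ z = p ∨ z = q := fun z hz =>
      (eq_or_ne z v).imp_right fun hzv => key hzv hz.ne (.inl hz)
    have hw : w = p ∨ w = q := key hvw.ne' hxw (.inr (.inr ⟨rfl, hvx⟩))
    obtain ⟨c, hc⟩ : ∃ c, ∀ z, G.Adj x z → z = v ∨ z = w ∨ z = c := by
      rcases hw with rfl | rfl
      · exact ⟨q, hN⟩
      · exact ⟨p, fun z hz => by grind⟩
    obtain ⟨z, hxz, hzv, hzc⟩ := hdeg x v c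
    have hzw : z = w := by grind
    exact .inr ⟨x, hxw, hvx, hzw ▸ hxz.symm, c, hc⟩
  · obtain ⟨z, hxz, hzp, hzq⟩ := hdeg x p q
    have hzv : z ≠ v := by rintro rfl; exact hvx hxz.symm
    exact absurd (key hzv hxz.ne (.inl hxz)) (by grind)

theorem exists_common_neighbor (hsmall : G.ContractionsHaveLowDegreeVertex)
    (hdeg : ∀ x a b, ∃ z, G.Adj x z ∧ z ≠ a ∧ z ≠ b) (hvw : G.Adj v w) :
    ∃ x, G.Adj v x ∧ G.Adj w x := by
  rcases neighbors_subset_pair_or_exists_common_neighbor hsmall hdeg hvw with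
    ⟨a, b, h⟩ | ⟨x, -, hvx, hwx, -⟩
  · obtain ⟨z, hvz, hzw, hza⟩ := hdeg v w a
    obtain ⟨z', hwz', hz'v, hz'a⟩ := hdeg w v a
    have hz : z = b := (h z hvz.ne' hzw (.inl hvz)).resolve_left hza
    have hz' : z' = b := (h z' hz'v hwz'.ne' (.inr hwz')).resolve_left hz'a
    exact ⟨b, hz ▸ hvz, hz' ▸ hwz'⟩
  · exact ⟨x, hvx, hwx⟩

theorem fan_center_adj_eq (hsmall : G.ContractionsHaveLowDegreeVertex)
    (hdeg : ∀ x a b, ∃ z, G.Adj x z ∧ z ≠ a ∧ z ≠ b)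
    (hN : ∀ z, G.Adj v z → z = a ∨ z = b ∨ z = c) (hva : G.Adj v a) (hvb : G.Adj v b)
    (hvc : G.Adj v c) (hab : G.Adj a b) (hac : G.Adj a c) (hbc : ¬G.Adj b c) (hbc' : b ≠ c) :
    ∀ z, G.Adj a z → z = v ∨ z = b ∨ z = c := by
  intro z haz
  by_contra hz
  push Not at hz
  -- contract `vb`: the only common neighbour of `v` and `b` is `a`, which has degree four
  rcases neighbors_subset_pair_or_exists_common_neighbor hsmall hdeg hvb with
    ⟨p, q, h⟩ | ⟨x, hxb, hvx, hbx, c', hx⟩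
  · obtain ⟨s, hbs, hsv, hsa⟩ := hdeg b v a
    have hsc : s ≠ c := by rintro rfl; exact hbc hbs
    have := h a hva.ne' hab.ne (.inl hva)
    have := h c hvc.ne' (Ne.symm hbc') (.inl hvc)
    have := h s hsv hbs.ne' (.inr hbs)
    grind [hac.ne]
  · rcases hN x hvx with rfl | rfl | rfl
    · have := hx c hac
      have := hx z haz
      grind [hvc.ne']
    · exact hxb rfl
    · exact hbc hbx

theorem false_of_fan_end (hsmall : G.ContractionsHaveLowDegreeVertex)
    (hdeg : ∀ x a b, ∃ z, G.Adj x z ∧ z ≠ a ∧ z ≠ b)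
    (hN : ∀ z, G.Adj v z → z = a ∨ z = b ∨ z = c) (hNa : ∀ z, G.Adj a z → z = v ∨ z = b ∨ z = c)
    (hbc : ¬G.Adj b c) {p q : V} (hb : ∀ z, G.Adj b z → z ≠ v → z ≠ a → z = p ∨ z = q)
    (hc : c = p ∨ c = q) : False := by
  -- `b` has a unique neighbour `s` outside `{v, a}`, and then `bs` lies in no triangle
  obtain ⟨s, hbs, hsv, hsa⟩ := hdeg b v a
  have hsc : s ≠ c := by rintro rfl; exact hbc hbs
  obtain ⟨y, hby, hsy⟩ := exists_common_neighbor hsmall hdeg hbs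
  have hyc : y ≠ c := by rintro rfl; exact hbc hby
  by_cases hyv : y = v
  · subst hyv
    rcases hN s hsy.symm with rfl | rfl | rfl
    exacts [hsa rfl, hbs.ne rfl, hsc rfl]
  by_cases hya : y = a
  · subst hya
    rcases hNa s hsy.symm with rfl | rfl | rfl
    exacts [hsv rfl, hbs.ne rfl, hsc rfl]
  have := hb y hby hyv hya
  have := hb s hbs hsv hsa
  grind [hsy.ne']

theorem false_of_fan (hsmall : G.ContractionsHaveLowDegreeVertex)
    (hdeg : ∀ x a b, ∃ z, G.Adj x z ∧ z ≠ a ∧ z ≠ b)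
    (hN : ∀ z, G.Adj v z → z = a ∨ z = b ∨ z = c) (hva : G.Adj v a) (hvb : G.Adj v b)
    (hvc : G.Adj v c) (hab : G.Adj a b) (hac : G.Adj a c) (hbc : ¬G.Adj b c) (hbc' : b ≠ c) :
    False := by
  have hNa := fan_center_adj_eq hsmall hdeg hN hva hvb hvc hab hac hbc hbc'
  have hbD : b ∉ ({v, a} : Set V) := by simp [hvb.ne', hab.ne']
  have hcD : c ∉ ({v, a} : Set V) := by simp [hvc.ne', hac.ne']
  -- in this minor only `b` and `c` can have lost neighbours
  obtain ⟨x, p, q, hx⟩ := hsmall {v, a} v b (by simp) (.inl hvb) ⟨b, hbD⟩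
  have key := fun {z : V} (hz : z ∉ ({v, a} : Set V)) =>
    contractInto_eq_or_eq_of_neighborSet_subset hx (z := z) hz
  have hout {z : V} (hxz : G.Adj x z) (hzv : z ≠ v) (hza : z ≠ a) : z = p ∨ z = q :=
    key (by simp [hzv, hza]) hxz.ne (.inl hxz)
  by_cases hxb : x.1 = b
  · refine false_of_fan_end hsmall hdeg hN hNa hbc (fun z hz => hout (by rwa [hxb])) ?_
    exact key hcD (hxb ▸ hbc') (.inr (.inl ⟨hxb, hvc⟩))
  by_cases hxc : x.1 = c
  · refine false_of_fan_end hsmall hdeg (b := c) (c := b) (fun z hz => (hN z hz).imp_right .symm)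
      (fun z hz => (hNa z hz).imp_right .symm) (fun h => hbc h.symm)
      (fun z hz => hout (by rwa [hxc])) ?_
    exact key hbD (hxc ▸ Ne.symm hbc') (.inr (.inr ⟨rfl, hxc ▸ hvc⟩))
  obtain ⟨z, hxz, hzp, hzq⟩ := hdeg x p q
  have hzv : z ≠ v := by rintro rfl; have := hN x hxz.symm; grind
  have hza : z ≠ a := by rintro rfl; have := hNa x hxz.symm; grind
  grind [hout hxz hzv hza]

theorem false_of_degree_three (hG : ¬HasK4Minor G) (hsmall : G.ContractionsHaveLowDegreeVertex)
    (hdeg : ∀ x a b, ∃ z, G.Adj x z ∧ z ≠ a ∧ z ≠ b)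
    (hN : ∀ z, G.Adj v z → z = a ∨ z = b ∨ z = c) : False := by
  obtain ⟨z₁, hz₁, hz₁a, hz₁b⟩ := hdeg v a b
  obtain ⟨z₂, hz₂, hz₂a, hz₂c⟩ := hdeg v a c
  obtain ⟨z₃, hz₃, hz₃b, hz₃c⟩ := hdeg v b c
  have hva : G.Adj v a := by grind
  have hvb : G.Adj v b := by grind
  have hvc : G.Adj v c := by grind
  have hab' : a ≠ b := by grind
  have hac' : a ≠ c := by grind
  have hbc' : b ≠ c := by grind
  have tri {x : V} (hvx : G.Adj v x) : ∃ y, G.Adj x y ∧ (y = a ∨ y = b ∨ y = c) := by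
    obtain ⟨y, hvy, hxy⟩ := exists_common_neighbor hsmall hdeg hvx
    exact ⟨y, hxy, hN y hvy⟩
  obtain ⟨ya, hay, hya⟩ := tri hva
  obtain ⟨yb, hby, hyb⟩ := tri hvb
  obtain ⟨yc, hcy, hyc⟩ := tri hvc
  by_cases hbc : G.Adj b c
  · by_cases hac : G.Adj a c
    · by_cases hab : G.Adj a b
      · exact hG (hasK4Minor_of_adj hva hvb hvc hab hac hbc)
      · exact false_of_fan hsmall hdeg (fun z hz => or_rotate.2 (hN z hz)) hvc hva hvb
          hac.symm hbc.symm hab hab'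
    · have hab : G.Adj a b := by
        rcases hya with h | h | h <;> rw [h] at hay
        exacts [absurd hay G.irrefl, hay, absurd hay hac]
      exact false_of_fan hsmall hdeg (fun z hz => or_left_comm.1 (hN z hz)) hvb hva hvc
        hab.symm hbc hac hac'
  · have hab : G.Adj a b := by
      rcases hyb with h | h | h <;> rw [h] at hby
      exacts [hby.symm, absurd hby G.irrefl, absurd hby hbc]
    have hac : G.Adj a c := by
      rcases hyc with h | h | h <;> rw [h] at hcy
      exacts [hcy.symm, absurd hcy.symm hbc, absurd hcy G.irrefl]
    exact false_of_fan hsmall hdeg hN hva hvb hvc hab hac hbc hbc'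

end LowDegree

theorem hasLowDegreeVertex_of_not_hasK4Minor [Finite V] [Nonempty V] (hG : ¬HasK4Minor G) :
    G.HasLowDegreeVertex := by
  induction h : Nat.card V using Nat.strong_induction_on generalizing V with
  | _ n ih =>
  by_contra hlow
  have hdeg (x a b : V) : ∃ z, G.Adj x z ∧ z ≠ a ∧ z ≠ b := by
    by_contra! hx
    exact hlow ⟨x, a, b, fun z hz => by simpa [or_iff_not_imp_left] using hx z hz⟩
  have hsmall : G.ContractionsHaveLowDegreeVertex := by
    intro D v w hv hvw hD
    have : Nonempty ↥Dᶜ := hD.to_subtype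
    exact ih _ (h ▸ Finite.card_subtype_lt (not_not.2 hv))
      (fun hK => hG (hK.of_contractInto hv hvw)) rfl
  obtain ⟨w₀⟩ := ‹Nonempty V›
  obtain ⟨u, hu, -⟩ := hdeg w₀ w₀ w₀
  obtain ⟨v, a, b, hv⟩ := hsmall {w₀} w₀ w₀ rfl (.inr rfl) ⟨u, hu.ne'⟩
  refine false_of_degree_three hG hsmall hdeg (v := v.1) (a := w₀) (b := a.1) (c := b.1)
    fun z hz => ?_
  by_cases hz₀ : z = w₀
  · exact .inl hz₀
  · exact .inr (contractInto_eq_or_eq_of_neighborSet_subset hv hz₀ hz.ne (.inl hz))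

/-- `T` together with a new vertex `none` adjacent to `x` and `y`. -/
def addApex (T : SimpleGraph W) (x y : W) : SimpleGraph (Option W) where
  Adj a b := match a, b with
    | some p, some q => T.Adj p q
    | none, some q => q = x ∨ q = y
    | some p, none => p = x ∨ p = y
    | none, none => False
  symm := ⟨by
    rintro (_ | p) (_ | q) h
    exacts [h, h, h, h.symm]⟩
  loopless := ⟨by
    rintro (_ | p) h
    exacts [h, T.irrefl h]⟩

section addApex

variable {T : SimpleGraph W} {x y p q : W}

@[simp] theorem addApex_adj_some_some : (T.addApex x y).Adj (some p) (some q) ↔ T.Adj p q :=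
  .rfl

@[simp] theorem addApex_adj_none_some : (T.addApex x y).Adj none (some q) ↔ q = x ∨ q = y :=
  .rfl

@[simp] theorem addApex_adj_some_none : (T.addApex x y).Adj (some p) none ↔ p = x ∨ p = y :=
  .rfl

theorem IsTwoTree.addApex (hT : IsTwoTree T) (hxy : T.Adj x y) : IsTwoTree (T.addApex x y) := by
  obtain ⟨n, hn, e, h01, hstep⟩ := hT
  let e' : Fin (n + 1) ≃ Option W := finSuccEquivLast.trans (Equiv.optionCongr e)
  have he' (i : Fin n) : e' i.castSucc = some (e i) := by simp [e']
  refine ⟨n + 1, by omega, e', ?_, fun i hi => ?_⟩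
  · have h0 : (⟨0, by omega⟩ : Fin (n + 1)) = Fin.castSucc ⟨0, by omega⟩ := rfl
    have h1 : (⟨1, by omega⟩ : Fin (n + 1)) = Fin.castSucc ⟨1, by omega⟩ := rfl
    rw [h0, h1, he', he']
    exact h01
  induction i using Fin.lastCases with
  | last =>
    refine ⟨(e.symm x).castSucc, (e.symm y).castSucc, Fin.castSucc_lt_last _,
      Fin.castSucc_lt_last _, by simpa using hxy.ne, by simpa [he'] using hxy, fun m hm => ?_⟩
    obtain ⟨m, rfl⟩ := Fin.exists_castSucc_eq.2 hm.ne
    simp [he', e', Equiv.eq_symm_apply]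
  | cast i =>
    obtain ⟨j, l, hj, hl, hjl, hadj, hm⟩ := hstep i (by simpa using hi)
    refine ⟨j.castSucc, l.castSucc, by simpa, by simpa, by simpa, by simpa [he'] using hadj,
      fun m hm' => ?_⟩
    obtain ⟨m, rfl⟩ := Fin.exists_castSucc_eq.2 (hm'.trans (Fin.castSucc_lt_last i)).ne
    simpa [he'] using hm m (by simpa using hm')

theorem IsTwoTree.exists_adj_subset (hT : IsTwoTree T) {s : Set W} (hs : s.Subsingleton) :
    ∃ x y, T.Adj x y ∧ s ⊆ {x, y} := by
  obtain ⟨n, hn, e, h01, hstep⟩ := hT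
  rcases hs.eq_empty_or_singleton with rfl | ⟨p, rfl⟩
  · exact ⟨_, _, h01, Set.empty_subset _⟩
  obtain ⟨i, rfl⟩ := e.surjective p
  by_cases hi : 2 ≤ (i : ℕ)
  · obtain ⟨j, _, hj, _, _, _, hm⟩ := hstep i hi
    exact ⟨e i, e j, ((hm j hj).2 (.inl rfl)).symm, by simp⟩
  · refine ⟨_, _, h01, Set.singleton_subset_iff.2 ?_⟩
    obtain h | h : (i : ℕ) = 0 ∨ (i : ℕ) = 1 := by omega
    · exact .inl (congrArg e (Fin.ext h))
    · exact .inr (congrArg e (Fin.ext h))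

end addApex

def IsPartialTwoTree (G : SimpleGraph V) : Prop :=
  ∃ (m : ℕ) (T : SimpleGraph (Fin m)) (f : V → Fin m),
    IsTwoTree T ∧ Function.Injective f ∧ ∀ a b, G.Adj a b → T.Adj (f a) (f b)

theorem IsPartialTwoTree.of_hom {T : SimpleGraph W} (hT : IsTwoTree T) (f : G →g T)
    (hf : Function.Injective f) : G.IsPartialTwoTree := by
  obtain ⟨n, hn, e, h01, hstep⟩ := hT
  exact ⟨n, T.comap e, e.symm ∘ f, ⟨n, hn, Equiv.refl _, h01, hstep⟩,
    e.symm.injective.comp hf, fun a b hab => by simpa using f.map_adj hab⟩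

theorem isPartialTwoTree_of_isEmpty [IsEmpty V] (G : SimpleGraph V) : G.IsPartialTwoTree :=
  ⟨2, ⊤, isEmptyElim, ⟨2, le_rfl, Equiv.refl _, by simp, fun i hi => absurd i.2 (by omega)⟩,
    fun a => isEmptyElim a, fun a => isEmptyElim a⟩

theorem IsPartialTwoTree.of_contractInto {v w b : V} (hN : G.neighborSet v ⊆ {w, b})
    (h : (G.contractInto {v} v w).IsPartialTwoTree) : G.IsPartialTwoTree := by
  classical
  obtain ⟨m, T, f, hT, hf, hfG⟩ := h
  obtain ⟨x, y, hxy, hcov⟩ : ∃ x y, T.Adj x y ∧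
      ∀ z (hz : z ≠ v), G.Adj v z → f ⟨z, hz⟩ = x ∨ f ⟨z, hz⟩ = y := by
    by_cases h₂ : G.Adj v w ∧ G.Adj v b ∧ w ≠ b
    · obtain ⟨hvw, hvb, hwb⟩ := h₂
      refine ⟨f ⟨w, hvw.ne'⟩, f ⟨b, hvb.ne'⟩,
        hfG _ _ (contractInto_adj_of_eq rfl hvb fun h => hwb (congrArg Subtype.val h)),
        fun z hz hvz => ?_⟩
      rcases hN hvz with rfl | rfl
      exacts [.inl rfl, .inr rfl]
    · have hNv {z₁ z₂ : V} (h₁ : G.Adj v z₁) (h₂' : G.Adj v z₂) : z₁ = z₂ := by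
        by_contra hne
        rcases hN h₁ with rfl | rfl <;> rcases hN h₂' with rfl | rfl
        exacts [hne rfl, h₂ ⟨h₁, h₂', hne⟩, h₂ ⟨h₂', h₁, Ne.symm hne⟩, hne rfl]
      have hs : (f '' {z | G.Adj v z}).Subsingleton := by
        rintro _ ⟨z₁, hz₁, rfl⟩ _ ⟨z₂, hz₂, rfl⟩
        exact congrArg f (Subtype.ext (hNv hz₁ hz₂))
      obtain ⟨x, y, hxy, hsub⟩ := hT.exists_adj_subset hs
      exact ⟨x, y, hxy, fun z hz hvz => hsub ⟨⟨z, hz⟩, hvz, rfl⟩⟩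
  let g (z : V) : Option (Fin m) := if hz : z = v then none else some (f ⟨z, hz⟩)
  have hg : Function.Injective g := by
    intro a c hac
    by_cases ha : a = v <;> by_cases hc : c = v
    · exact ha.trans hc.symm
    all_goals simp [g, ha, hc] at hac
    exact congrArg Subtype.val (hf hac)
  refine IsPartialTwoTree.of_hom (hT.addApex hxy) ⟨g, fun {a c} hac => ?_⟩ hg
  by_cases ha : a = v <;> by_cases hc : c = v
  · exact absurd (ha.trans hc.symm ▸ hac) G.irrefl
  · subst ha
    simpa [g, hc] using hcov c hc hac
  · subst hc
    simpa [g, ha] using hcov a ha hac.symm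
  · simpa [g, ha, hc] using
      hfG ⟨a, ha⟩ ⟨c, hc⟩ (contractInto_adj_of_adj (x := ⟨a, ha⟩) (y := ⟨c, hc⟩) hac)

theorem isPartialTwoTree_of_not_hasK4Minor [Finite V] (hG : ¬HasK4Minor G) :
    G.IsPartialTwoTree := by
  induction h : Nat.card V using Nat.strong_induction_on generalizing V with
  | _ n ih =>
  cases isEmpty_or_nonempty V
  · exact isPartialTwoTree_of_isEmpty G
  obtain ⟨v, a, b, hN⟩ := hasLowDegreeVertex_of_not_hasK4Minor hG
  have hcard : Nat.card ↥({v}ᶜ : Set V) < n := h ▸ Finite.card_subtype_lt (not_not.2 rfl)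
  have hv : v ∈ ({v} : Set V) := rfl
  by_cases hva : G.Adj v a
  · exact .of_contractInto hN (ih _ hcard (fun hK => hG (hK.of_contractInto hv (.inl hva))) rfl)
  · have hN' : G.neighborSet v ⊆ {v, b} := fun z hz =>
      .inr ((hN hz).resolve_left fun hza => hva (hza ▸ hz))
    exact .of_contractInto hN' (ih _ hcard (fun hK => hG (hK.of_contractInto hv (.inr hv))) rfl)

end SimpleGraph

/-- A (finite) graph is `K₄`-minor-free iff it is a subgraph of some 2-tree. -/
theorem K4MinorFree_iff_partialTwoTree {V : Type*} [Fintype V] (G : SimpleGraph V) :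
    ¬ HasK4Minor G ↔
      ∃ (m : ℕ) (T : SimpleGraph (Fin m)) (f : V → Fin m),
        IsTwoTree T ∧ Function.Injective f ∧
        ∀ a b, G.Adj a b → T.Adj (f a) (f b) := by
  refine ⟨isPartialTwoTree_of_not_hasK4Minor, ?_⟩
  rintro ⟨m, T, f, hT, hf, hfG⟩ hK
  exact hT.not_hasK4Minor (hK.map ⟨f, hfG _ _⟩ hf)
end

section
/- The projective hypercube PC(2k), defined as the Cayley graph on ℤ₂^{2k} with connection set {e_1, …, e_{2k}, J} (where e_i are the standard basis vectors and J is the all-ones vector), has diameter at most k; moreover, every pair of vertices of PC(2k) lies on a common cycle of length 2k+1. -/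
/-!
Write `y = x + d`. Listing the coordinates in the support of `d` first and the remaining ones
afterwards, and flipping them one at a time starting from `x`, gives a path of length `2k` from
`x` to `x + J` through `y`: the vertices visited are `x` plus the indicator vectors of the
prefixes of the list, which are pairwise distinct. The edge `x + J ~ x` closes it into a cycle of
length `2k + 1`, and two vertices on a cycle of length `2k + 1` are at distance at most `k`.
-/

open SimpleGraph

/-- The projective hypercube `PC(2k)`: the Cayley graph on `ℤ₂^{2k}` with connection
set consisting of the `2k` standard basis vectors and the all-ones vector. -/
def PC (k : ℕ) : SimpleGraph (Fin (2*k) → ZMod 2) :=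
  SimpleGraph.fromRel fun x y =>
    (∃ i : Fin (2*k), y = x + fun j => if j = i then 1 else 0) ∨
    y = x + fun _ => 1

lemma List.nodup_inits {α : Type*} (l : List α) : l.inits.Nodup := by
  induction l with
  | nil => simp
  | cons a l ih => simpa [List.inits_cons] using ih.map List.cons_injective

lemma List.eq_of_isPrefix_of_mem_iff {α : Type*} {L P Q : List α} (hL : L.Nodup)
    (hP : P <+: L) (hQ : Q <+: L) (h : ∀ j, j ∈ P ↔ j ∈ Q) : P = Q := by
  have hPQ : P.length ≤ Q.length :=
    (hL.sublist hP.sublist).length_le_of_subset fun j hj => (h j).1 hj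
  have hQP : Q.length ≤ P.length :=
    (hL.sublist hQ.sublist).length_le_of_subset fun j hj => (h j).2 hj
  rw [List.prefix_iff_eq_take.1 hP, List.prefix_iff_eq_take.1 hQ, Nat.le_antisymm hPQ hQP]

lemma List.sum_map_single_apply {ι M : Type*} [DecidableEq ι] [AddCommMonoid M] (a : M)
    {P : List ι} (hP : P.Nodup) (j : ι) :
    (P.map (Pi.single · a)).sum j = if j ∈ P then a else 0 := by
  rw [← List.sum_toFinset _ hP, Finset.sum_apply, Finset.sum_pi_single]
  simp

namespace SimpleGraph

variable {V : Type*} {G : SimpleGraph V}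

lemma two_mul_dist_le_length_of_mem_support {u v : V} {c : G.Walk u u}
    (hv : v ∈ c.support) : 2 * G.dist u v ≤ c.length := by
  classical
  have hsplit := congrArg Walk.length (c.take_spec hv)
  rw [Walk.length_append] at hsplit
  have hto := dist_le (c.takeUntil v hv)
  have hfrom := dist_le (c.dropUntil v hv)
  rw [dist_comm] at hfrom
  omega

namespace Walk

lemma IsPath.isCycle_cons {u v : V} {p : G.Walk v u} (hp : p.IsPath) (h : G.Adj u v)
    (hlen : 2 ≤ p.length) : (cons h p).IsCycle := by
  refine isCycle_iff_isPath_tail_and_le_length.2 ⟨by simpa using hp, ?_⟩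
  rw [length_cons]
  omega

section Steps

variable [AddMonoid V] {ι : Type*} (f : ι → V) (hf : ∀ v i, G.Adj v (v + f i))

def ofSteps (x : V) : (I : List ι) → G.Walk x (x + (I.map f).sum)
  | [] => nil.copy rfl (by simp)
  | i :: I => cons (hf x i) ((ofSteps (x + f i) I).copy rfl (by simp [add_assoc]))

@[simp]
lemma length_ofSteps (x : V) (I : List ι) : (ofSteps f hf x I).length = I.length := by
  induction I generalizing x with
  | nil => simp [ofSteps]
  | cons i I ih => simp [ofSteps, ih]

lemma support_ofSteps (x : V) (I : List ι) :
    (ofSteps f hf x I).support = I.inits.map fun P => x + (P.map f).sum := by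
  induction I generalizing x with
  | nil => simp [ofSteps]
  | cons i I ih => simp [ofSteps, ih, add_assoc]

lemma isPath_ofSteps [IsLeftCancelAdd V] (x : V) {I : List ι}
    (hI : ∀ P Q, P <+: I → Q <+: I → (P.map f).sum = (Q.map f).sum → P = Q) :
    (ofSteps f hf x I).IsPath := by
  rw [isPath_def, support_ofSteps]
  refine (List.nodup_inits I).map_on fun P hP Q hQ hPQ => ?_
  exact hI P Q ((List.mem_inits _ _).1 hP) ((List.mem_inits _ _).1 hQ) (add_left_cancel hPQ)

end Steps

lemma isPath_ofSteps_single {ι M : Type*} [DecidableEq ι] [AddCancelCommMonoid M]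
    {G : SimpleGraph (ι → M)} {a : M} (ha : a ≠ 0) (hf : ∀ v i, G.Adj v (v + Pi.single i a)) (x : ι → M) {I : List ι}
    (hI : I.Nodup) : (ofSteps (Pi.single · a) hf x I).IsPath := by
  refine isPath_ofSteps _ _ x fun P Q hP hQ hPQ => ?_
  refine List.eq_of_isPrefix_of_mem_iff hI hP hQ fun j => ?_
  have := congrFun hPQ j
  rw [List.sum_map_single_apply a (hI.sublist hP.sublist),
    List.sum_map_single_apply a (hI.sublist hQ.sublist)] at this
  split_ifs at this <;> simp_all

end Walk

end SimpleGraph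

lemma PC_adj_add_single {k : ℕ} (x : Fin (2*k) → ZMod 2) (i : Fin (2*k)) :
    (PC k).Adj x (x + Pi.single i 1) := by
  refine (fromRel_adj _ _ _).2 ⟨left_ne_add.2 (by simp), Or.inl (Or.inl ⟨i, ?_⟩)⟩
  congr 1
  funext j
  exact Pi.single_apply i 1 j

lemma PC_adj_add_one {k : ℕ} (hk : 0 < k) (x : Fin (2*k) → ZMod 2) :
    (PC k).Adj x (x + 1) := by
  refine (fromRel_adj _ _ _).2 ⟨left_ne_add.2 fun h => ?_, Or.inl (Or.inr rfl)⟩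
  simpa using congrFun h ⟨0, by omega⟩

lemma PC_exists_isCycle {k : ℕ} (hk : 0 < k) (x y : Fin (2*k) → ZMod 2) :
    ∃ c : (PC k).Walk x x, c.IsCycle ∧ c.length = 2*k+1 ∧ y ∈ c.support := by
  let e : Fin (2*k) → Fin (2*k) → ZMod 2 := (Pi.single · 1)
  let differs : Fin (2*k) → Bool := fun j => x j ≠ y j
  set I := (List.finRange (2*k)).filter differs ++ (List.finRange (2*k)).filter (!differs ·)
  have hperm : I.Perm (List.finRange (2*k)) := List.filter_append_perm _ _
  have hI : I.Nodup := hperm.nodup_iff.2 (List.nodup_finRange _)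
  have hsum (P : List (Fin (2*k))) (hP : P <+: I) (j : Fin (2*k)) :
      (P.map e).sum j = if j ∈ P then 1 else 0 :=
    List.sum_map_single_apply 1 (hI.sublist hP.sublist) j
  have hend : x + (I.map e).sum = x + 1 := by
    ext j
    simp [hsum I (List.prefix_refl I), hperm.mem_iff]
  let w := Walk.ofSteps e PC_adj_add_single x I
  have hw : w.IsPath := Walk.isPath_ofSteps_single one_ne_zero PC_adj_add_single x hI
  have hy : y ∈ w.support := by
    rw [Walk.support_ofSteps, List.mem_map]
    refine ⟨_, (List.mem_inits _ _).2 (List.prefix_append _ _), ?_⟩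
    ext j
    rw [Pi.add_apply, hsum _ (List.prefix_append _ _)]
    have hflip : ∀ a b : ZMod 2, a + (if a ≠ b then 1 else 0) = b := by decide
    simpa [differs, List.mem_filter] using hflip (x j) (y j)
  let p : (PC k).Walk (x + 1) x := w.reverse.copy hend rfl
  have hp : p.IsPath := by simpa [p] using hw
  have hlen : p.length = 2*k := by simp [p, w, hperm.length_eq]
  exact ⟨.cons (PC_adj_add_one hk x) p, hp.isCycle_cons _ (by omega), by simp [hlen],
    by simp [p, hy]⟩

/-- Every pair of vertices of `PC(2k)` lies on a common `(2k+1)`-cycle, and the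
diameter of `PC(2k)` is at most `k`. -/
theorem PC_common_cycle_and_diam (k : ℕ) (hk : 1 ≤ k) (x y : Fin (2*k) → ZMod 2) :
    (∃ (v : Fin (2*k) → ZMod 2) (w : (PC k).Walk v v),
      w.IsCycle ∧ w.length = 2*k+1 ∧ x ∈ w.support ∧ y ∈ w.support) ∧
    (PC k).dist x y ≤ k := by
  obtain ⟨c, hc, hlen, hy⟩ := PC_exists_isCycle hk x y
  refine ⟨⟨x, c, hc, hlen, c.start_mem_support, hy⟩, ?_⟩
  have := two_mul_dist_le_length_of_mem_support hy
  omega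
end

section
/- The projective hypercube PC(2k) is distance-transitive: if u, v, x, y are vertices of PC(2k) with d(u,v) = d(x,y), then there is a graph automorphism of PC(2k) sending u to x and v to y. -/
open SimpleGraph

/-! With `|w|` the Hamming weight, a vertex `w` is the sum of `|w|` basis vectors, and also of
`J` and the `2k - |w|` complementary ones; each generator changes `min (|w|, 2k + 1 - |w|)` by at
most one, so this is `d(0, w)`. Translations and every additive automorphism preserving the
connection set are graph automorphisms. Coordinate permutations act transitively on vectors of
equal weight, and the involution `w ↦ w + w_i (e_i + J)`, which swaps `e_i` and `J`, turns weight
`m` into `2k + 1 - m` when `w_i = 1`. -/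

section Hamming

theorem zmod_two_eq_one_of_ne_zero {c : ZMod 2} (hc : c ≠ 0) : c = 1 := by
  revert c; decide

variable {ι : Type*} [Fintype ι]

theorem hammingNorm_add_le {β : ι → Type*} [∀ i, AddGroup (β i)] [∀ i, DecidableEq (β i)]
    (x y : ∀ i, β i) : hammingNorm (x + y) ≤ hammingNorm x + hammingNorm y := by
  calc hammingNorm (x + y) = hammingDist 0 (x + y) := by rw [hammingDist_zero_left]
    _ ≤ hammingDist 0 x + hammingDist x (x + y) := hammingDist_triangle _ _ _
    _ = hammingNorm x + hammingNorm y := by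
      rw [hammingDist_zero_left, hammingDist_eq_hammingNorm, neg_add_cancel_left]

theorem hammingNorm_single_one [DecidableEq ι] {R : Type*} [Zero R] [One R] [NeZero (1 : R)]
    [DecidableEq R] (i : ι) : hammingNorm (Pi.single i 1 : ι → R) = 1 := by
  simp [hammingNorm, Pi.single_apply, Finset.filter_eq']

theorem hammingNorm_add_one_add_hammingNorm (w : ι → ZMod 2) :
    hammingNorm (w + 1) + hammingNorm w = Fintype.card ι := by
  have hflip : ∀ c : ZMod 2, c + 1 ≠ 0 ↔ c = 0 := by decide
  simp only [hammingNorm, Pi.add_apply, Pi.one_apply, hflip]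
  exact Finset.card_filter_add_card_filter_not _

theorem hammingNorm_add_single_one_add_one [DecidableEq ι] {w : ι → ZMod 2} {i : ι}
    (hw : w i ≠ 0) : hammingNorm (w + Pi.single i 1 : ι → ZMod 2) + 1 = hammingNorm w := by
  have hwi : w i + 1 = 0 := by rw [zmod_two_eq_one_of_ne_zero hw]; rfl
  have hsupp : ({j | (w + Pi.single i 1 : ι → ZMod 2) j ≠ 0} : Finset ι) =
      ({j | w j ≠ 0} : Finset ι).erase i := by
    ext j
    by_cases hj : j = i
    · subst hj; simp [hwi]
    · simp [hj, Pi.single_apply]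
  rw [hammingNorm, hammingNorm, hsupp, Finset.card_erase_add_one (by simpa using hw)]

theorem exists_perm_comp_eq_of_hammingNorm_eq {w w' : ι → ZMod 2}
    (h : hammingNorm w = hammingNorm w') : ∃ σ : Equiv.Perm ι, w ∘ σ = w' := by
  classical
  let e := Finset.equivOfCardEq h.symm
  have hsupp (j : ι) : w (e.extendSubtype j) ≠ 0 ↔ w' j ≠ 0 := by
    by_cases hj : w' j ≠ 0
    · simpa [hj] using e.extendSubtype_mem j (by simpa using hj)
    · simpa [hj] using e.extendSubtype_not_mem j (by simpa using hj)
  refine ⟨e.extendSubtype, funext fun j => ?_⟩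
  have h01 : ∀ c d : ZMod 2, (c ≠ 0 ↔ d ≠ 0) → c = d := by decide
  exact h01 _ _ (hsupp j)

end Hamming

namespace PC

def connectionSet (ι : Type*) [DecidableEq ι] : Set (ι → ZMod 2) :=
  insert 1 (Set.range fun i => Pi.single i 1)

variable {ι : Type*}

def permAddEquiv (σ : Equiv.Perm ι) : (ι → ZMod 2) ≃+ (ι → ZMod 2) :=
  (LinearEquiv.funCongrLeft (ZMod 2) (ZMod 2) σ).toAddEquiv

@[simp] theorem permAddEquiv_apply (σ : Equiv.Perm ι) (w : ι → ZMod 2) :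
    permAddEquiv σ w = w ∘ σ := rfl

variable [DecidableEq ι]

theorem comp_perm_mem_connectionSet {w : ι → ZMod 2} (σ : Equiv.Perm ι)
    (hw : w ∈ connectionSet ι) : w ∘ σ ∈ connectionSet ι := by
  rcases hw with rfl | ⟨i, rfl⟩
  · exact Or.inl rfl
  · exact Or.inr ⟨σ.symm i, (Pi.single_comp_equiv σ i 1).symm⟩

theorem permAddEquiv_mem_connectionSet_iff (σ : Equiv.Perm ι) (w : ι → ZMod 2) :
    permAddEquiv σ w ∈ connectionSet ι ↔ w ∈ connectionSet ι := by
  refine ⟨fun hw => ?_, comp_perm_mem_connectionSet σ⟩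
  simpa [Function.comp_assoc] using comp_perm_mem_connectionSet σ.symm hw

def foldMap (i : ι) (w : ι → ZMod 2) : ι → ZMod 2 :=
  w + w i • (Pi.single i 1 + 1)

theorem foldMap_involutive (i : ι) : Function.Involutive (foldMap (ι := ι) i) := by
  intro w
  have hi : foldMap i w i = w i := by
    simp [foldMap, ZModModule.add_self]
  simp only [foldMap] at hi ⊢
  rw [hi, add_assoc, ZModModule.add_self, add_zero]

def fold (i : ι) : (ι → ZMod 2) ≃+ (ι → ZMod 2) :=
  AddEquiv.mk' (foldMap_involutive i).toPerm fun w v => by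
    simp only [Function.Involutive.coe_toPerm, foldMap, Pi.add_apply, add_smul]
    abel

theorem fold_apply (i : ι) (w : ι → ZMod 2) : fold i w = w + w i • (Pi.single i 1 + 1) := rfl

theorem fold_mem_connectionSet {i : ι} {w : ι → ZMod 2} (hw : w ∈ connectionSet ι) :
    fold i w ∈ connectionSet ι := by
  rcases hw with rfl | ⟨l, rfl⟩
  · refine Or.inr ⟨i, ?_⟩
    rw [fold_apply, Pi.one_apply, one_smul, add_left_comm, ZModModule.add_self, add_zero]
  · dsimp only
    by_cases hl : l = i
    · subst hl
      refine Or.inl ?_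
      rw [fold_apply, Pi.single_eq_same, one_smul, ← add_assoc, ZModModule.add_self, zero_add]
    · refine Or.inr ⟨l, ?_⟩
      rw [fold_apply, Pi.single_eq_of_ne' hl, zero_smul, add_zero]

theorem fold_mem_connectionSet_iff (i : ι) (w : ι → ZMod 2) :
    fold i w ∈ connectionSet ι ↔ w ∈ connectionSet ι :=
  ⟨fun hw => foldMap_involutive i w ▸ fold_mem_connectionSet hw, fold_mem_connectionSet⟩

theorem fold_of_ne_zero {i : ι} {w : ι → ZMod 2} (hw : w i ≠ 0) :
    fold i w = w + Pi.single i 1 + 1 := by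
  rw [fold_apply, zmod_two_eq_one_of_ne_zero hw, one_smul, add_assoc]

section Fintype

variable [Fintype ι]

def foldedWeight (w : ι → ZMod 2) : ℕ :=
  min (hammingNorm w) (Fintype.card ι + 1 - hammingNorm w)

theorem foldedWeight_le_add_one {w g : ι → ZMod 2} (hg : g ∈ connectionSet ι) :
    foldedWeight w ≤ foldedWeight (w + g) + 1 := by
  have hle (v : ι → ZMod 2) : hammingNorm v ≤ Fintype.card ι := hammingNorm_le_card_fintype
  have hw := hle w
  have hwg := hle (w + g)
  unfold foldedWeight
  rcases hg with rfl | ⟨i, rfl⟩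
  · have := hammingNorm_add_one_add_hammingNorm w
    omega
  · dsimp only at hwg ⊢
    have h₁ := hammingNorm_add_le (w + Pi.single i 1) (Pi.single i 1)
    have h₂ := hammingNorm_add_le w (Pi.single i (1 : ZMod 2))
    rw [add_assoc, ZModModule.add_self, add_zero, hammingNorm_single_one] at h₁
    rw [hammingNorm_single_one] at h₂
    omega

theorem exists_addEquiv_apply_eq_of_foldedWeight_eq {w w' : ι → ZMod 2}
    (h : foldedWeight w = foldedWeight w') :
    ∃ L : (ι → ZMod 2) ≃+ (ι → ZMod 2),
      (∀ z, L z ∈ connectionSet ι ↔ z ∈ connectionSet ι) ∧ L w = w' := by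
  have hw : hammingNorm w ≤ Fintype.card ι := hammingNorm_le_card_fintype
  have hw' : hammingNorm w' ≤ Fintype.card ι := hammingNorm_le_card_fintype
  unfold foldedWeight at h
  by_cases heq : hammingNorm w = hammingNorm w'
  · obtain ⟨σ, hσ⟩ := exists_perm_comp_eq_of_hammingNorm_eq heq
    exact ⟨permAddEquiv σ, permAddEquiv_mem_connectionSet_iff σ, hσ⟩
  · obtain ⟨i, hi⟩ : ∃ i, w i ≠ 0 := by
      by_contra! h0
      have : hammingNorm w = 0 := hammingNorm_eq_zero.mpr (funext h0)
      omega
    have hfold : hammingNorm (fold i w) = hammingNorm w' := by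
      have h₁ := hammingNorm_add_one_add_hammingNorm (w + Pi.single i 1)
      have h₂ := hammingNorm_add_single_one_add_one hi
      rw [fold_of_ne_zero hi]
      omega
    obtain ⟨σ, hσ⟩ := exists_perm_comp_eq_of_hammingNorm_eq hfold
    refine ⟨(fold i).trans (permAddEquiv σ), fun z => ?_, hσ⟩
    rw [AddEquiv.trans_apply, permAddEquiv_mem_connectionSet_iff, fold_mem_connectionSet_iff]

end Fintype

variable {k : ℕ}

theorem adj_iff {a b : Fin (2*k) → ZMod 2} :
    (PC k).Adj a b ↔ a ≠ b ∧ a + b ∈ connectionSet (Fin (2*k)) := by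
  have hsingle (i : Fin (2*k)) : (fun j => if j = i then (1 : ZMod 2) else 0) = Pi.single i 1 := by
    ext j; rw [Pi.single_apply]
  have hrel (x y : Fin (2*k) → ZMod 2) :
      ((∃ i : Fin (2*k), y = x + fun j => if j = i then 1 else 0) ∨ y = x + fun _ => 1) ↔
        y + x ∈ connectionSet (Fin (2*k)) := by
    simp only [hsingle, ← sub_eq_iff_eq_add', ZModModule.sub_eq_add, connectionSet,
      Set.mem_insert_iff, Set.mem_range, eq_comm (b := y + x)]
    exact or_comm
  rw [PC, fromRel_adj, hrel, hrel, add_comm b a, or_self]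

theorem adj_self_add_iff {a g : Fin (2*k) → ZMod 2} :
    (PC k).Adj a (a + g) ↔ g ≠ 0 ∧ g ∈ connectionSet (Fin (2*k)) := by
  rw [adj_iff, ← add_assoc, ZModModule.add_self, zero_add, Ne, left_eq_add]

def affineIso (L : (Fin (2*k) → ZMod 2) ≃+ (Fin (2*k) → ZMod 2))
    (hL : ∀ z, L z ∈ connectionSet (Fin (2*k)) ↔ z ∈ connectionSet (Fin (2*k)))
    (c : Fin (2*k) → ZMod 2) : PC k ≃g PC k where
  toEquiv := L.toEquiv.trans (Equiv.addRight c)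
  map_rel_iff' {a b} := by
    change (PC k).Adj (L a + c) (L b + c) ↔ (PC k).Adj a b
    rw [adj_iff, adj_iff, add_add_add_comm, ZModModule.add_self, add_zero, ← map_add, hL,
      Ne, Ne, add_left_inj, L.apply_eq_iff_eq]

@[simp] theorem affineIso_apply (L : (Fin (2*k) → ZMod 2) ≃+ (Fin (2*k) → ZMod 2)) (hL)
    (c w : Fin (2*k) → ZMod 2) : affineIso L hL c w = L w + c := rfl

theorem foldedWeight_le_length {a b : Fin (2*k) → ZMod 2} (p : (PC k).Walk a b) :
    foldedWeight (a + b) ≤ p.length := by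
  induction p with
  | nil => simp [foldedWeight, ZModModule.add_self]
  | @cons a c b h p ih =>
    calc foldedWeight (a + b) ≤ foldedWeight ((a + b) + (a + c)) + 1 :=
          foldedWeight_le_add_one (adj_iff.1 h).2
      _ = foldedWeight (c + b) + 1 := by
          rw [add_comm a b, ZModModule.add_add_add_cancel, add_comm b c]
      _ ≤ (Walk.cons h p).length := by
          rw [Walk.length_cons]; omega

theorem exists_walk_length_eq_hammingNorm (a b : Fin (2*k) → ZMod 2) :
    ∃ p : (PC k).Walk a b, p.length = hammingNorm (a + b) := by
  induction h : hammingNorm (a + b) generalizing a with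
  | zero =>
    rw [hammingNorm_eq_zero, ← ZModModule.sub_eq_add, sub_eq_zero] at h
    subst h
    exact ⟨Walk.nil, rfl⟩
  | succ n ih =>
    obtain ⟨i, hi⟩ : ∃ i, (a + b) i ≠ 0 :=
      Function.ne_iff.1 (hammingNorm_ne_zero_iff.1 (by omega))
    have hadj : (PC k).Adj a (a + Pi.single i 1) :=
      adj_self_add_iff.2 ⟨by simp, Or.inr ⟨i, rfl⟩⟩
    have hn : hammingNorm (a + Pi.single i 1 + b) = n := by
      have := hammingNorm_add_single_one_add_one hi
      rw [add_right_comm]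
      omega
    obtain ⟨p, hp⟩ := ih _ hn
    exact ⟨Walk.cons hadj p, by rw [Walk.length_cons, hp]⟩

theorem exists_walk_length_eq_foldedWeight (a b : Fin (2*k) → ZMod 2) :
    ∃ p : (PC k).Walk a b, p.length = foldedWeight (a + b) := by
  have hcard : hammingNorm (a + b) ≤ 2*k := by
    simpa using hammingNorm_le_card_fintype (x := a + b)
  by_cases hle : hammingNorm (a + b) ≤ 2*k + 1 - hammingNorm (a + b)
  · obtain ⟨p, hp⟩ := exists_walk_length_eq_hammingNorm a b
    exact ⟨p, by simp [foldedWeight, hp, hle]⟩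
  · have hadj : (PC k).Adj a (a + 1) :=
      adj_self_add_iff.2 ⟨fun h => by simpa using congrFun h ⟨0, by omega⟩, Or.inl rfl⟩
    obtain ⟨p, hp⟩ := exists_walk_length_eq_hammingNorm (a + 1) b
    have hcompl := hammingNorm_add_one_add_hammingNorm (a + b)
    rw [Fintype.card_fin, ← add_right_comm] at hcompl
    refine ⟨Walk.cons hadj p, ?_⟩
    simp only [foldedWeight, Walk.length_cons, hp, Fintype.card_fin]
    omega

theorem dist_eq (a b : Fin (2*k) → ZMod 2) : (PC k).dist a b = foldedWeight (a + b) := by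
  obtain ⟨p, hp⟩ := exists_walk_length_eq_foldedWeight a b
  obtain ⟨q, hq⟩ := p.reachable.exists_walk_length_eq_dist
  exact le_antisymm (hp ▸ dist_le p) (hq ▸ foldedWeight_le_length q)

end PC

theorem PC_distanceTransitive_general (k : ℕ) (u v x y : Fin (2*k) → ZMod 2)
    (h : (PC k).dist u v = (PC k).dist x y) :
    ∃ φ : PC k ≃g PC k, φ u = x ∧ φ v = y := by
  rw [PC.dist_eq, PC.dist_eq] at h
  obtain ⟨L, hL, hLuv⟩ := PC.exists_addEquiv_apply_eq_of_foldedWeight_eq h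
  refine ⟨PC.affineIso L hL (x + L u), ?_, ?_⟩
  · rw [PC.affineIso_apply, add_left_comm, ZModModule.add_self, add_zero]
  · rw [PC.affineIso_apply, add_left_comm, ← map_add, add_comm v u, hLuv, ← add_assoc,
      ZModModule.add_self, zero_add]

/-- `PC(2k)` is distance-transitive. -/
theorem PC_distanceTransitive (k : ℕ) (hk : 1 ≤ k) (u v x y : Fin (2*k) → ZMod 2)
    (h : (PC k).dist u v = (PC k).dist x y) :
    ∃ φ : PC k ≃g PC k, φ u = x ∧ φ v = y :=
  PC_distanceTransitive_general k u v x y h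
end

section
/- The projective hypercube PC(2k) has odd-girth exactly 2k+1. -/
open SimpleGraph

/-! Index the generators of `PC(2k)` by `Option (Fin (2k))`: `gen (some i) = eᵢ`, `gen none = J`.
For each generator `g` the linear form `parity` (the coordinate sum, or in characteristic 2 the sum
of the coordinates other than `i`) is `0` on `g` and `1` on every other generator. Along a closed
walk without `g`-steps it changes at every step, so such a walk has even length: an odd closed walk
takes a step in each of the `2k + 1` directions. Conversely the partial sums
`0, e₁, e₁ + e₂, …, e₁ + ⋯ + e_{2k} = J` close up, through a `J`-step, to a `(2k+1)`-cycle. -/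

theorem SimpleGraph.Walk.apply_eq_add_length {V : Type*} {G : SimpleGraph V} (f : V → ZMod 2)
    {u v : V} (w : G.Walk u v) (h : ∀ d ∈ w.darts, f d.snd = f d.fst + 1) :
    f v = f u + w.length := by
  induction w with
  | nil => simp
  | cons _ w ih =>
    rw [ih fun d hd => h d (List.mem_cons_of_mem _ hd), h _ List.mem_cons_self]
    push_cast [Walk.length_cons]
    ring

theorem SimpleGraph.Walk.exists_dart_apply_snd_ne_of_odd_length {V : Type*} {G : SimpleGraph V}
    (f : V → ZMod 2) {u : V} (w : G.Walk u u) (hw : Odd w.length) :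
    ∃ d ∈ w.darts, f d.snd ≠ f d.fst + 1 := by
  by_contra! h
  have := w.apply_eq_add_length f h
  rw [(ZMod.natCast_eq_one_iff_odd).2 hw] at this
  simp at this

namespace PC

variable {k : ℕ}

def gen (k : ℕ) : Option (Fin (2*k)) → Fin (2*k) → ZMod 2
  | none => fun _ => 1
  | some i => fun j => if j = i then 1 else 0

theorem exists_eq_add_gen_of_adj {x y : Fin (2*k) → ZMod 2} (h : (PC k).Adj x y) :
    ∃ o, y = x + gen k o := by
  obtain ⟨-, (⟨i, rfl⟩ | rfl) | (⟨i, rfl⟩ | rfl)⟩ := h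
  · exact ⟨some i, rfl⟩
  · exact ⟨none, rfl⟩
  · refine ⟨some i, ?_⟩
    show y = y + gen k (some i) + gen k (some i)
    rw [add_assoc, ZModModule.add_self, add_zero]
  · refine ⟨none, ?_⟩
    show y = y + gen k none + gen k none
    rw [add_assoc, ZModModule.add_self, add_zero]

theorem gen_ne_zero (hk : 0 < k) (o : Option (Fin (2*k))) : gen k o ≠ 0 := by
  intro h
  cases o with
  | none => simpa [gen] using congrFun h ⟨0, by omega⟩
  | some i => simpa [gen] using congrFun h i

theorem adj_add_gen (hk : 0 < k) (x : Fin (2*k) → ZMod 2) (o : Option (Fin (2*k))) :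
    (PC k).Adj x (x + gen k o) := by
  refine ⟨by simpa using gen_ne_zero hk o, Or.inl ?_⟩
  cases o with
  | none => exact Or.inr rfl
  | some i => exact Or.inl ⟨i, rfl⟩

def parity (o : Option (Fin (2*k))) (x : Fin (2*k) → ZMod 2) : ZMod 2 :=
  ∑ j, x j + o.elim 0 x

theorem parity_add (o : Option (Fin (2*k))) (x y : Fin (2*k) → ZMod 2) :
    parity o (x + y) = parity o x + parity o y := by
  cases o <;> simp only [parity, Pi.add_apply, Finset.sum_add_distrib, Option.elim] <;> ring

theorem parity_gen (o o' : Option (Fin (2*k))) :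
    parity o (gen k o') = if o' = o then 0 else 1 := by
  have two : (2 : ZMod 2) = 0 := rfl
  cases o <;> cases o' <;> simp [parity, gen, two]
  split_ifs <;> simp_all [one_add_one_eq_two]

theorem gen_injective : Function.Injective (gen k) := fun o o' h => by
  have h0 := parity_gen (k := k) o o
  rw [h, parity_gen] at h0
  by_contra hne
  simp [Ne.symm hne] at h0

theorem exists_dart_eq_add_gen_of_odd_length {x : Fin (2*k) → ZMod 2} (w : (PC k).Walk x x)
    (hw : Odd w.length) (o : Option (Fin (2*k))) : ∃ d ∈ w.darts, d.snd = d.fst + gen k o := by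
  obtain ⟨d, hd, hne⟩ := w.exists_dart_apply_snd_ne_of_odd_length (parity o) hw
  obtain ⟨o', ho'⟩ := exists_eq_add_gen_of_adj d.adj
  obtain rfl : o' = o := by
    by_contra h
    rw [ho', parity_add, parity_gen, if_neg h] at hne
    exact hne rfl
  exact ⟨d, hd, ho'⟩

theorem le_length_of_odd_length {x : Fin (2*k) → ZMod 2} (w : (PC k).Walk x x)
    (hw : Odd w.length) : 2*k+1 ≤ w.length :=
  calc 2*k+1 = (Finset.univ : Finset (Option (Fin (2*k)))).card := by simp
    _ ≤ (w.darts.map fun d => d.snd - d.fst).toFinset.card := by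
      refine Finset.card_le_card_of_injOn (gen k) (fun o _ => ?_) gen_injective.injOn
      obtain ⟨d, hd, hstep⟩ := exists_dart_eq_add_gen_of_odd_length w hw o
      simpa using ⟨d, hd, by rw [hstep, add_sub_cancel_left]⟩
    _ ≤ (w.darts.map fun d => d.snd - d.fst).length := List.toFinset_card_le _
    _ = w.length := by simp

def partialSum (k m : ℕ) : Fin (2*k) → ZMod 2 := fun j => if (j : ℕ) < m then 1 else 0

theorem partialSum_succ {m : ℕ} (hm : m < 2*k) :
    partialSum k (m+1) = partialSum k m + gen k (some ⟨m, hm⟩) := by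
  funext j
  simp only [partialSum, gen, Pi.add_apply, Fin.ext_iff]
  rcases Nat.lt_trichotomy j m with h | h | h
  · simp [h, h.ne, Nat.lt_succ_of_lt h]
  · simp [h]
  · simp [h.ne', show ¬ (j : ℕ) < m + 1 by omega, show ¬ (j : ℕ) < m by omega]

theorem partialSum_zero : partialSum k 0 = partialSum k (2*k) + gen k none := by
  funext j
  simp only [partialSum, gen, Pi.add_apply, Nat.not_lt_zero, j.isLt, if_true, if_false]
  rfl

theorem partialSum_injOn : Set.InjOn (partialSum k) (Set.Iic (2*k)) := by
  intro m hm m' hm' h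
  by_contra hne
  wlog hlt : m < m' generalizing m m'
  · exact this hm' hm h.symm (Ne.symm hne) (by omega)
  have := congrFun h ⟨m, by have := Set.mem_Iic.1 hm'; omega⟩
  simp [partialSum, hlt] at this

theorem adj_partialSum_of_sub_eq_one {u v : Fin (2*k+1)} (h : (v - u).val = 1) :
    (PC k).Adj (partialSum k u) (partialSum k v) := by
  rcases le_or_gt u v with huv | hvu
  · rw [Fin.coe_sub_iff_le.2 huv] at h
    have hu : (u : ℕ) < 2*k := by omega
    rw [show (v : ℕ) = u + 1 by omega, partialSum_succ hu]
    exact adj_add_gen (k := k) (by omega) _ _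
  · rw [Fin.coe_sub_iff_lt.2 hvu] at h
    have hv : (v : ℕ) = 0 := by omega
    have hu : (u : ℕ) = 2*k := by omega
    rw [hu, hv, partialSum_zero]
    exact adj_add_gen (k := k) (by omega) _ _

def cycleCopy (k : ℕ) : Copy (cycleGraph (2*k+1)) (PC k) :=
  Hom.toCopy ⟨fun u => partialSum k u, fun {u v} h => by
    rcases cycleGraph_adj'.1 h with h | h
    · exact (adj_partialSum_of_sub_eq_one h).symm
    · exact adj_partialSum_of_sub_eq_one h⟩
    fun u v h =>
      Fin.ext (partialSum_injOn (Set.mem_Iic.2 (by omega)) (Set.mem_Iic.2 (by omega)) h)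

end PC

/-- The projective hypercube `PC(2k)` has odd-girth exactly `2k+1`. -/
theorem PC_oddGirth (k : ℕ) (hk : 1 ≤ k) : hasOddGirth (PC k) (2*k+1) :=
  ⟨fun _ w _ hw => PC.le_length_of_odd_length w hw,
    (cycleGraph_isContained_iff (by omega)).1 ⟨PC.cycleCopy k⟩⟩
end
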